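/- arXiv:1801.06006 — 10 statements merged into one kernel-verified Lean document; each statement's English description precedes it below -/
import Mathlib

section
/- Let t ≥ 2 and B ≥ 0 be integers. Then for every integer j with (4B+1)·2^t + 1 ≤ j ≤ (4B+3)·2^t, one has ν₂( C( (8B+2)·2^t + 1 , j ) ) ≥ α(B). -/
/-!
By Kummer's theorem `ν₂ C(x + y, x) = α x + α y - α (x + y)` is the number of carries in `x + y`.
Discarding the carries among the lowest `t` binary digits gives
`ν₂ C(n, j) ≥ α ⌊j / 2^t⌋ + α ⌊(n - j) / 2^t⌋ - α ⌊n / 2^t⌋`. For `n = (8B + 2) 2^t + 1` we have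
`⌊n / 2^t⌋ = 8B + 2` with `α = α B + 1`, while `⌊j / 2^t⌋ ∈ [4B + 1, 4B + 3]` has `α ≥ α B + 1`
and `⌊(n - j) / 2^t⌋ ∈ [4B - 1, 4B + 1]` has `α ≥ α B`.
-/

namespace Nat

theorem digits_sum_add_base_mul {b : ℕ} (hb : 1 < b) {x : ℕ} (hx : x < b) (y : ℕ) :
    (b.digits (x + b * y)).sum = x + (b.digits y).sum := by
  rcases eq_or_ne x 0 with rfl | hx0
  · rcases eq_or_ne y 0 with rfl | hy0
    · simp
    · rw [digits_add b hb 0 y hx (Or.inr hy0), List.sum_cons]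
  · rw [digits_add b hb x y hx (Or.inl hx0), List.sum_cons]

theorem digits_sum_mul_pow_add {b : ℕ} (hb : 1 < b) (q : ℕ) {k r : ℕ} (hr : r < b ^ k) :
    (b.digits (q * b ^ k + r)).sum = (b.digits q).sum + (b.digits r).sum := by
  induction k generalizing r with
  | zero => simp_all
  | succ k ih =>
    have hr' : r / b < b ^ k := Nat.div_lt_of_lt_mul (by rwa [← pow_succ'])
    have hsplit : q * b ^ (k + 1) + r = r % b + b * (q * b ^ k + r / b) := by
      rw [pow_succ]; linarith [Nat.mod_add_div r b]
    rw [hsplit, digits_sum_add_base_mul hb (Nat.mod_lt r (by omega)), ih hr',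
      ← Nat.mod_add_div r b, digits_sum_add_base_mul hb (Nat.mod_lt r (by omega)),
      Nat.mod_add_div r b]
    ring

theorem digits_sum_eq_div_add_mod {b : ℕ} (hb : 1 < b) (k n : ℕ) :
    (b.digits n).sum = (b.digits (n / b ^ k)).sum + (b.digits (n % b ^ k)).sum := by
  conv_lhs => rw [← Nat.div_add_mod' n (b ^ k)]
  exact digits_sum_mul_pow_add hb _ (Nat.mod_lt n (by positivity))

theorem one_le_digits_sum (b : ℕ) {n : ℕ} (hn : n ≠ 0) : 1 ≤ (b.digits n).sum :=
  (one_le_iff_ne_zero.mpr (getLast_digit_ne_zero b hn)).trans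
    (List.le_sum_of_mem (List.getLast_mem _))

/-- `m! n! ∣ (m + n)!`, and Legendre's formula turns this into the inequality of digit sums. -/
theorem digits_sum_add_le (p : ℕ) [Fact p.Prime] (m n : ℕ) :
    (p.digits (m + n)).sum ≤ (p.digits m).sum + (p.digits n).sum := by
  have hfac : padicValNat p (m ! * n !) ≤ padicValNat p (m + n)! :=
    (padicValNat_dvd_iff_le (factorial_ne_zero _)).mp
      (pow_padicValNat_dvd.trans (factorial_mul_factorial_dvd_factorial_add m n))
  rw [padicValNat.mul (factorial_ne_zero _) (factorial_ne_zero _)] at hfac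
  have hlegendre := Nat.mul_le_mul_left (p - 1) hfac
  rw [mul_add, sub_one_mul_padicValNat_factorial, sub_one_mul_padicValNat_factorial,
    sub_one_mul_padicValNat_factorial] at hlegendre
  have := digit_sum_le p (m + n)
  have := digit_sum_le p m
  have := digit_sum_le p n
  omega

theorem digits_sum_mod_pow_le {b : ℕ} (hb : 1 < b) (k n : ℕ) :
    (b.digits (n % b ^ k)).sum ≤ (b.digits n).sum := by
  rw [digits_sum_eq_div_add_mod hb k n]
  exact Nat.le_add_left _ _

theorem digits_sum_div_pow_le_padicValNat_choose (p : ℕ) [hp : Fact p.Prime] (k x y : ℕ) :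
    (p.digits (x / p ^ k)).sum + (p.digits (y / p ^ k)).sum ≤
      (p.digits ((x + y) / p ^ k)).sum + (p - 1) * padicValNat p ((x + y).choose x) := by
  have hp1 : 1 < p := hp.out.one_lt
  have hkummer := sub_one_mul_padicValNat_choose_eq_sub_sum_digits' (p := p) (k := x) (n := y)
  rw [add_comm y x] at hkummer
  have hlow : (p.digits ((x + y) % p ^ k)).sum ≤
      (p.digits (x % p ^ k)).sum + (p.digits (y % p ^ k)).sum := by
    rw [Nat.add_mod]
    exact (digits_sum_mod_pow_le hp1 k _).trans (digits_sum_add_le p _ _)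
  have := digits_sum_eq_div_add_mod hp1 k x
  have := digits_sum_eq_div_add_mod hp1 k y
  have := digits_sum_eq_div_add_mod hp1 k (x + y)
  have := digits_sum_add_le p x y
  omega

end Nat

open Nat

theorem digits_two_sum_add_one_le_of_four_mul_lt {B X : ℕ} (h₁ : 4 * B < X) (h₂ : X < 4 * B + 4) :
    (Nat.digits 2 B).sum + 1 ≤ (Nat.digits 2 X).sum := by
  have hX : X = B * 2 ^ 2 + (X - 4 * B) := by omega
  rw [hX, digits_sum_mul_pow_add one_lt_two B (by omega)]
  have := one_le_digits_sum 2 (n := X - 4 * B) (by omega)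
  omega

theorem digits_two_sum_le_of_four_mul_le_succ {B Y : ℕ} (h₁ : 4 * B ≤ Y + 1) (h₂ : Y < 4 * B + 4) :
    (Nat.digits 2 B).sum ≤ (Nat.digits 2 Y).sum := by
  rcases le_or_gt (4 * B) Y with hY | hY
  · have hsplit : Y = B * 2 ^ 2 + (Y - 4 * B) := by omega
    rw [hsplit, digits_sum_mul_pow_add one_lt_two B (by omega)]
    exact Nat.le_add_right _ _
  · have hsplit : Y = (B - 1) * 2 ^ 2 + 3 := by omega
    have hB : (Nat.digits 2 B).sum ≤ (Nat.digits 2 (B - 1)).sum + 1 := by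
      simpa [Nat.sub_add_cancel (show 1 ≤ B by omega)] using digits_sum_add_le 2 (B - 1) 1
    rw [hsplit, digits_sum_mul_pow_add one_lt_two (B - 1) (by norm_num)]
    norm_num
    omega

/-- Lemma 2.3: for `t ≥ 2`, `B ≥ 0`, and `(4B+1)·2^t + 1 ≤ j ≤ (4B+3)·2^t`,
the 2-adic valuation of `C((8B+2)·2^t + 1, j)` is at least `α(B)`. -/
theorem stmt0 (t B : ℕ) (ht : 2 ≤ t) (j : ℕ)
    (hj1 : (4 * B + 1) * 2 ^ t + 1 ≤ j) (hj2 : j ≤ (4 * B + 3) * 2 ^ t) :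
    (Nat.digits 2 B).sum ≤ padicValNat 2 (Nat.choose ((8 * B + 2) * 2 ^ t + 1) j) := by
  rcases Nat.eq_zero_or_pos B with rfl | hB
  · simp
  have hjn : j ≤ (8 * B + 2) * 2 ^ t + 1 :=
    hj2.trans ((Nat.mul_le_mul_right _ (by omega)).trans (Nat.le_succ _))
  have hkey := digits_sum_div_pow_le_padicValNat_choose 2 t j ((8 * B + 2) * 2 ^ t + 1 - j)
  rw [Nat.add_sub_cancel' hjn, Nat.add_one_sub_one, one_mul] at hkey
  have hM : 2 ≤ 2 ^ t := le_self_pow₀ one_le_two (by omega)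
  generalize 2 ^ t = M at *
  have hn : ((8 * B + 2) * M + 1) / M = B * 2 ^ 3 + 2 :=
    Nat.div_eq_of_lt_le (by ring_nf; omega) (by ring_nf; omega)
  rw [hn, digits_sum_mul_pow_add one_lt_two B (by norm_num : 2 < 2 ^ 3)] at hkey
  have hX := digits_two_sum_add_one_le_of_four_mul_lt (B := B) (X := j / M)
    ((Nat.le_div_iff_mul_le (by omega)).mpr (by omega : (4 * B + 1) * M ≤ j))
    (Nat.lt_succ_of_le (Nat.div_le_of_le_mul (by rw [mul_comm]; exact hj2)))
  have hY := digits_two_sum_le_of_four_mul_le_succ (B := B) (Y := ((8 * B + 2) * M + 1 - j) / M)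
    (by
      have : (4 * B - 1) * M ≤ (8 * B + 2) * M + 1 - j := by
        rw [Nat.sub_mul]; ring_nf at hj2 ⊢; omega
      have := (Nat.le_div_iff_mul_le (by omega)).mpr this
      omega)
    (Nat.lt_succ_of_le (Nat.div_le_of_le_mul (by ring_nf at hj1 ⊢; omega)))
  norm_num at hkey
  omega
end

section
/- Let t ≥ 2 and B ≥ 1 be integers, let d be an integer with −2^t + 1 ≤ d ≤ 2^t, and set N = (8B+2)·2^t + 1 and M = (4B+2)·2^t + d (a positive integer). Then: if −2^t + 1 ≤ d < 0, then ν₂(C(N,M)) = α(B) + t + 1 − ν₂(d·(d−1)); if d = 0 or d = 1, then ν₂(C(N,M)) = α(B); and if 2 ≤ d ≤ 2^t, then ν₂(C(N,M)) = α(B) + t + ν₂(B) + 2 − ν₂(d·(d−1)). (Here ν₂(d·(d−1)) is the 2-adic valuation of the nonzero integer d·(d−1).) -/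
def S (n : ℕ) : ℕ := (Nat.digits 2 n).sum

lemma Sdiv (n : ℕ) : S n = S (n / 2) + n % 2 := by
  unfold S
  rcases Nat.eq_zero_or_pos n with h | h
  · simp [h]
  · rw [Nat.digits_def' one_lt_two h]; simp [Nat.add_comm]

lemma Skey : ∀ n : ℕ, 1 ≤ n →
    S n + padicValNat 2 n = S (n - 1) + 1 := by
  intro n
  induction n using Nat.strong_induction_on with
  | _ n ih =>
    intro hn
    rcases Nat.even_or_odd n with he | ho
    · obtain ⟨m, rfl⟩ := he
      have hm : 1 ≤ m := by omega
      have h2 : m + m = 2 * m := by ring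
      rw [h2] at *
      have hv : padicValNat 2 (2 * m) = padicValNat 2 2 + padicValNat 2 m :=
        padicValNat.mul (by norm_num) (by omega)
      have hv2 : padicValNat 2 2 = 1 := padicValNat.self one_lt_two
      have hS1 : S (2 * m) = S m := by
        rw [Sdiv (2 * m)]; simp [Nat.mul_div_cancel_left, Nat.mul_mod_right]
      have hS2 : S (2 * m - 1) = S (m - 1) + 1 := by
        rw [Sdiv (2 * m - 1)]
        have h1 : (2 * m - 1) / 2 = m - 1 := by omega
        have h2' : (2 * m - 1) % 2 = 1 := by omega
        rw [h1, h2']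
      have := ih m (by omega) hm
      omega
    · have hv : padicValNat 2 n = 0 :=
        padicValNat.eq_zero_of_not_dvd (by rwa [Nat.odd_iff, ← Nat.two_dvd_ne_zero] at ho)
      have hS1 : S n = S (n / 2) + 1 := by
        rw [Sdiv n, Nat.odd_iff.mp ho]
      have hodd : n % 2 = 1 := Nat.odd_iff.mp ho
      have hS2 : S (n - 1) = S (n / 2) := by
        rw [Sdiv (n - 1)]
        have h1 : (n - 1) / 2 = n / 2 := by omega
        have h2 : (n - 1) % 2 = 0 := by omega
        rw [h1, h2, Nat.add_zero]
      omega

lemma Ssplit : ∀ (k a r : ℕ), r < 2 ^ k → S (2 ^ k * a + r) = S a + S r := by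
  intro k
  induction k with
  | zero => intro a r hr; interval_cases r; simp [S]
  | succ k ih =>
    intro a r hr
    have hpow : 2 ^ (k + 1) * a = 2 * (2 ^ k * a) := by ring
    rw [hpow, Sdiv (2 * (2 ^ k * a) + r)]
    have h1 : (2 * (2 ^ k * a) + r) / 2 = 2 ^ k * a + r / 2 := by omega
    have h2 : (2 * (2 ^ k * a) + r) % 2 = r % 2 := by omega
    have hpow2 : 2 ^ (k + 1) = 2 * 2 ^ k := by ring
    rw [h1, h2, ih a (r / 2) (by omega), Sdiv r]
    omega

lemma Scompl : ∀ (t x : ℕ), x < 2 ^ t → S x + S (2 ^ t - 1 - x) = t := by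
  intro t
  induction t with
  | zero => intro x hx; interval_cases x; simp [S]
  | succ t ih =>
    intro x hx
    have hpow : 2 ^ (t + 1) = 2 * 2 ^ t := by ring
    set y := 2 ^ (t + 1) - 1 - x with hy
    have h1 : y / 2 = 2 ^ t - 1 - x / 2 := by rw [hy, hpow]; omega
    have h2 : y % 2 + x % 2 = 1 := by rw [hy, hpow]; omega
    have h3 := ih (x / 2) (by omega)
    rw [Sdiv x, Sdiv y, h1]
    omega

lemma Spos : ∀ n : ℕ, 1 ≤ n → 1 ≤ S n := by
  intro n
  induction n using Nat.strong_induction_on with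
  | _ n ih =>
    intro hn
    rw [Sdiv n]
    rcases Nat.eq_zero_or_pos (n % 2) with h | h
    · have := ih (n / 2) (by omega) (by omega); omega
    · omega

lemma S1 : S 1 = 1 := by simp [S]

lemma S0 : S 0 = 0 := by simp [S]

lemma S2B (B : ℕ) : S (2 * B) = S B := by
  rw [Sdiv (2 * B)]
  have h1 : 2 * B / 2 = B := by omega
  have h2 : 2 * B % 2 = 0 := by omega
  rw [h1, h2, Nat.add_zero]

lemma S4B (B : ℕ) : S (4 * B) = S B := by
  have h : 4 * B = 2 * (2 * B) := by ring
  rw [h, S2B, S2B]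

lemma S4B1 (B : ℕ) : S (4 * B + 1) = S B + 1 := by
  rw [Sdiv (4 * B + 1)]
  have h1 : (4 * B + 1) / 2 = 2 * B := by omega
  have h2 : (4 * B + 1) % 2 = 1 := by omega
  rw [h1, h2, S2B]

lemma S4B2 (B : ℕ) : S (4 * B + 2) = S B + 1 := by
  have h : 4 * B + 2 = 2 * (2 * B + 1) := by ring
  rw [h, Sdiv (2 * (2 * B + 1))]
  have h1 : 2 * (2 * B + 1) / 2 = 2 * B + 1 := by omega
  have h2 : 2 * (2 * B + 1) % 2 = 0 := by omega
  rw [h1, h2, Sdiv (2 * B + 1)]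
  have h3 : (2 * B + 1) / 2 = B := by omega
  have h4 : (2 * B + 1) % 2 = 1 := by omega
  rw [h3, h4]

lemma S4B3 (B : ℕ) : S (4 * B + 3) = S B + 2 := by
  rw [Sdiv (4 * B + 3)]
  have h1 : (4 * B + 3) / 2 = 2 * B + 1 := by omega
  have h2 : (4 * B + 3) % 2 = 1 := by omega
  rw [h1, h2, Sdiv (2 * B + 1)]
  have h3 : (2 * B + 1) / 2 = B := by omega
  have h4 : (2 * B + 1) % 2 = 1 := by omega
  rw [h3, h4]

lemma v4B (B : ℕ) (hB : 1 ≤ B) :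
    padicValNat 2 (4 * B) = padicValNat 2 B + 2 := by
  have h : 4 * B = 2 ^ 2 * B := by ring
  rw [h, padicValNat.mul (by positivity) (by omega), padicValNat.prime_pow]
  omega

lemma S4Bm1 (B : ℕ) (hB : 1 ≤ B) :
    S (4 * B - 1) = S B + padicValNat 2 B + 1 := by
  have h := Skey (4 * B) (by omega)
  rw [v4B B hB, S4B] at h
  omega

/-- Lemma 2.3 (precise form): with `N = (8B+2)·2^t + 1` and `M = (4B+2)·2^t + d`
for `−2^t + 1 ≤ d ≤ 2^t`, the 2-adic valuation of `C(N,M)` is as stated. -/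
theorem stmt1 (t B : ℕ) (ht : 2 ≤ t) (hB : 1 ≤ B) (d : ℤ)
    (hd1 : -(2 ^ t) + 1 ≤ d) (hd2 : d ≤ 2 ^ t)
    (N M : ℕ) (hN : N = (8 * B + 2) * 2 ^ t + 1)
    (hM : (M : ℤ) = (4 * B + 2) * 2 ^ t + d) :
    (d < 0 →
      (padicValNat 2 (N.choose M) : ℤ) =
        (Nat.digits 2 B).sum + t + 1 - padicValInt 2 (d * (d - 1))) ∧
    (d = 0 ∨ d = 1 →
      padicValNat 2 (N.choose M) = (Nat.digits 2 B).sum) ∧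
    (2 ≤ d →
      (padicValNat 2 (N.choose M) : ℤ) =
        (Nat.digits 2 B).sum + t + padicValNat 2 B + 2 - padicValInt 2 (d * (d - 1))) := by
  have h2t : 1 < 2 ^ t := Nat.one_lt_two_pow_iff.mpr (by omega)
  have hcast : ((2 ^ t : ℕ) : ℤ) = 2 ^ t := by push_cast; ring
  have hSN : S N = S B + 2 := by
    have h : N = 2 ^ (t + 1) * (4 * B + 1) + 1 := by rw [hN]; ring
    rw [h, Ssplit (t + 1) _ 1 (Nat.one_lt_two_pow_iff.mpr (by omega)), S4B1, S1]
  have hS2t : S (2 ^ t) = 1 := by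
    have h := Ssplit t 1 0 (by omega)
    simpa [S1, S0] using h
  refine ⟨?_, ?_, ?_⟩
  · -- case d < 0
    intro hdneg
    obtain ⟨c, hc⟩ : ∃ c : ℕ, (c : ℤ) = -d := ⟨(-d).toNat, Int.toNat_of_nonneg (by omega)⟩
    have hc1 : 1 ≤ c := by omega
    have hc2 : c < 2 ^ t := by
      have h : (c : ℤ) < ((2 ^ t : ℕ) : ℤ) := by rw [hc, hcast]; omega
      exact_mod_cast h
    have hMn : M + c = (4 * B + 2) * 2 ^ t := by
      have h2 : (M : ℤ) + c = (((4 * B + 2) * 2 ^ t : ℕ) : ℤ) := by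
        rw [hM, hc]; push_cast; ring
      exact_mod_cast h2
    have e1 : (4 * B + 2) * 2 ^ t = 2 ^ t * (4 * B + 1) + 2 ^ t := by ring
    have e2 : (8 * B + 2) * 2 ^ t = 2 ^ t * (4 * B + 1) + 2 ^ t + 2 ^ t * (4 * B) := by ring
    have e3 : 2 ^ t * (4 * B + 1) = 2 ^ t * (4 * B) + 2 ^ t := by ring
    have hMeq : M = 2 ^ t * (4 * B + 1) + (2 ^ t - c) := by omega
    have hSM : S M = S B + 1 + S (2 ^ t - c) := by
      rw [hMeq, Ssplit t _ _ (by omega), S4B1]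
    have hcompl := Scompl t (c - 1) (by omega)
    rw [show 2 ^ t - 1 - (c - 1) = 2 ^ t - c from by omega] at hcompl
    have hMle : M ≤ N := by omega
    have hSR : S (N - M) = S B + S (c + 1) := by
      rcases Nat.lt_or_ge (c + 1) (2 ^ t) with hlt | hge
      · rw [show N - M = 2 ^ t * (4 * B) + (c + 1) from by omega,
          Ssplit t _ _ hlt, S4B]
      · have hce : c + 1 = 2 ^ t := by omega
        rw [show N - M = 2 ^ t * (4 * B + 1) + 0 from by omega,
          Ssplit t _ 0 (by omega), S4B1, S0, hce, hS2t]
    have hk1 := Skey c hc1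
    have hk2 := Skey (c + 1) (by omega)
    rw [show c + 1 - 1 = c from by omega] at hk2
    have hval : padicValInt 2 (d * (d - 1)) =
        padicValNat 2 c + padicValNat 2 (c + 1) := by
      have hd' : d * (d - 1) = ((c * (c + 1) : ℕ) : ℤ) := by
        push_cast; rw [hc]; ring
      rw [hd', padicValInt.of_nat, padicValNat.mul (by omega) (by omega)]
    have hK := sub_one_mul_padicValNat_choose_eq_sub_sum_digits (p := 2) hMle
    simp only [show (2 : ℕ) - 1 = 1 from rfl, one_mul] at hK
    rw [show (Nat.digits 2 M).sum = S M from rfl,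
      show (Nat.digits 2 (N - M)).sum = S (N - M) from rfl,
      show (Nat.digits 2 N).sum = S N from rfl] at hK
    have hSp := Spos (c + 1) (by omega)
    rw [hval, show (Nat.digits 2 B).sum = S B from rfl]
    omega
  · -- case d = 0 or d = 1
    intro h01
    show padicValNat 2 (N.choose M) = S B
    have e2 : (8 * B + 2) * 2 ^ t = 2 ^ t * (4 * B + 2) + 2 ^ t * (4 * B) := by ring
    rcases h01 with h0 | h1
    · subst h0
      have hMn : M = 2 ^ t * (4 * B + 2) := by
        have h2 : (M : ℤ) = ((2 ^ t * (4 * B + 2) : ℕ) : ℤ) := by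
          rw [hM]; push_cast; ring
        exact_mod_cast h2
      have hMle : M ≤ N := by omega
      have hSM : S M = S B + 1 := by
        rw [show M = 2 ^ t * (4 * B + 2) + 0 from by omega,
          Ssplit t _ 0 (by omega), S4B2, S0]
      have hSR : S (N - M) = S B + 1 := by
        rw [show N - M = 2 ^ t * (4 * B) + 1 from by omega,
          Ssplit t _ 1 h2t, S4B, S1]
      have hK := sub_one_mul_padicValNat_choose_eq_sub_sum_digits (p := 2) hMle
      simp only [show (2 : ℕ) - 1 = 1 from rfl, one_mul] at hK
      rw [show (Nat.digits 2 M).sum = S M from rfl,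
        show (Nat.digits 2 (N - M)).sum = S (N - M) from rfl,
        show (Nat.digits 2 N).sum = S N from rfl] at hK
      omega
    · subst h1
      have hMn : M = 2 ^ t * (4 * B + 2) + 1 := by
        have h2 : (M : ℤ) = ((2 ^ t * (4 * B + 2) + 1 : ℕ) : ℤ) := by
          rw [hM]; push_cast; ring
        exact_mod_cast h2
      have hMle : M ≤ N := by omega
      have hSM : S M = S B + 2 := by
        rw [hMn, Ssplit t _ 1 h2t, S4B2, S1]
      have hSR : S (N - M) = S B := by
        rw [show N - M = 2 ^ t * (4 * B) + 0 from by omega,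
          Ssplit t _ 0 (by omega), S4B, S0]
        omega
      have hK := sub_one_mul_padicValNat_choose_eq_sub_sum_digits (p := 2) hMle
      simp only [show (2 : ℕ) - 1 = 1 from rfl, one_mul] at hK
      rw [show (Nat.digits 2 M).sum = S M from rfl,
        show (Nat.digits 2 (N - M)).sum = S (N - M) from rfl,
        show (Nat.digits 2 N).sum = S N from rfl] at hK
      omega
  · -- case 2 ≤ d
    intro hd2le
    obtain ⟨e, he⟩ : ∃ e : ℕ, (e : ℤ) = d := ⟨d.toNat, Int.toNat_of_nonneg (by omega)⟩
    have he2 : 2 ≤ e := by omega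
    have he3 : e ≤ 2 ^ t := by
      have h : (e : ℤ) ≤ ((2 ^ t : ℕ) : ℤ) := by rw [he, hcast]; omega
      exact_mod_cast h
    have hMn : M = (4 * B + 2) * 2 ^ t + e := by
      have h2 : (M : ℤ) = (((4 * B + 2) * 2 ^ t + e : ℕ) : ℤ) := by
        rw [hM, ← he]; push_cast; ring
      exact_mod_cast h2
    have hval : padicValInt 2 (d * (d - 1)) =
        padicValNat 2 e + padicValNat 2 (e - 1) := by
      have h0 : ((e - 1 : ℕ) : ℤ) = (e : ℤ) - 1 := by omega
      have hd' : d * (d - 1) = ((e * (e - 1) : ℕ) : ℤ) := by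
        rw [Nat.cast_mul, h0, he]
      rw [hd', padicValInt.of_nat, padicValNat.mul (by omega) (by omega)]
    have hk1 := Skey e (by omega)
    have hk2 := Skey (e - 1) (by omega)
    rw [show e - 1 - 1 = e - 2 from by omega] at hk2
    have e1 : (4 * B + 2) * 2 ^ t = 2 ^ t * (4 * B + 2) := by ring
    have e2 : 2 ^ t * (4 * B) = 2 ^ t * (4 * B - 1) + 2 ^ t := by
      have h : 4 * B - 1 + 1 = 4 * B := Nat.sub_add_cancel (by omega)
      calc 2 ^ t * (4 * B) = 2 ^ t * (4 * B - 1 + 1) := by rw [h]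
        _ = 2 ^ t * (4 * B - 1) + 2 ^ t := by ring
    have e3 : (8 * B + 2) * 2 ^ t = 2 ^ t * (4 * B + 2) + 2 ^ t * (4 * B) := by ring
    have e4 : 2 ^ t ≤ 2 ^ t * (4 * B) := Nat.le_mul_of_pos_right _ (by omega)
    have hMle : M ≤ N := by omega
    have hK := sub_one_mul_padicValNat_choose_eq_sub_sum_digits (p := 2) hMle
    simp only [show (2 : ℕ) - 1 = 1 from rfl, one_mul] at hK
    rw [show (Nat.digits 2 M).sum = S M from rfl,
      show (Nat.digits 2 (N - M)).sum = S (N - M) from rfl,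
      show (Nat.digits 2 N).sum = S N from rfl] at hK
    rw [hval, show (Nat.digits 2 B).sum = S B from rfl]
    rcases Nat.lt_or_ge e (2 ^ t) with hlt | hge
    · have hSM : S M = S B + 1 + S e := by
        rw [show M = 2 ^ t * (4 * B + 2) + e from by omega,
          Ssplit t _ _ hlt, S4B2]
      have hSR : S (N - M) = S B + padicValNat 2 B + 1 + S (2 ^ t - (e - 1)) := by
        rw [show N - M = 2 ^ t * (4 * B - 1) + (2 ^ t - (e - 1)) from by omega,
          Ssplit t _ _ (by omega), S4Bm1 B hB]
      have hcompl := Scompl t (e - 2) (by omega)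
      rw [show 2 ^ t - 1 - (e - 2) = 2 ^ t - (e - 1) from by omega] at hcompl
      omega
    · have he4 : e = 2 ^ t := by omega
      have e5 : 2 ^ t * (4 * B + 3) = 2 ^ t * (4 * B + 2) + 2 ^ t := by ring
      have hSM : S M = S B + 2 := by
        rw [show M = 2 ^ t * (4 * B + 3) + 0 from by omega,
          Ssplit t _ 0 (by omega), S4B3, S0]
      have hSR : S (N - M) = S B + padicValNat 2 B + 2 := by
        rw [show N - M = 2 ^ t * (4 * B - 1) + 1 from by omega,
          Ssplit t _ 1 h2t, S4Bm1 B hB, S1]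
      have hve : padicValNat 2 e = t := by rw [he4]; exact padicValNat.prime_pow t
      have hve1 : padicValNat 2 (e - 1) = 0 := by
        apply padicValNat.eq_zero_of_not_dvd
        have hdvd : 2 ∣ 2 ^ t := dvd_pow_self 2 (by omega)
        omega
      omega
end

section
/- Let r ≥ 0 and let A be a positive integer with A ≡ 5 (mod 8) and α(A) = 2^r + 2, and set m = A·2^r. Then ν₂( Σ_{(ℓ₁,ℓ₂)} C(m, m−ℓ₁) · C(2m − 7·2^r, m−ℓ₂) ) = 2^r, where the sum ranges over the six ordered pairs (ℓ₁, ℓ₂) of distinct elements of the set {2^r, 2^{r+1}, 2^{r+2}}. -/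
private def s (n : ℕ) : ℕ := (Nat.digits 2 n).sum

private lemma s_even (n : ℕ) : s (2*n) = s n := by
  rcases Nat.eq_zero_or_pos n with h | h
  · simp [s, h]
  · unfold s
    rw [Nat.digits_def' (by norm_num) (by omega)]
    simp [Nat.mul_div_cancel_left _ (by norm_num : 0 < 2), Nat.mul_mod_right]

private lemma s_odd (n : ℕ) : s (2*n+1) = s n + 1 := by
  unfold s
  rw [Nat.digits_def' (by norm_num) (by omega)]
  have h1 : (2*n+1) % 2 = 1 := by omega
  have h2 : (2*n+1) / 2 = n := by omega
  rw [h1, h2]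
  simp [Nat.add_comm]

private lemma s_mul_pow (c r : ℕ) : s (c * 2^r) = s c := by
  induction r with
  | zero => simp
  | succ n ih =>
    have : c * 2^(n+1) = 2 * (c * 2^n) := by ring
    rw [this, s_even, ih]

private lemma s_fact (x : ℕ) : padicValNat 2 (Nat.factorial x) + s x = x := by
  have h := sub_one_mul_padicValNat_factorial (p := 2) x
  have h2 := Nat.digit_sum_le 2 x
  unfold s
  omega

private lemma nu_choose (a b : ℕ) : padicValNat 2 ((a+b).choose a) + s (a+b) = s a + s b := by
  have hfac : (a+b).choose a * (Nat.factorial a) * (Nat.factorial b) = (Nat.factorial (a+b)) := by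
    have := Nat.choose_mul_factorial_mul_factorial (Nat.le_add_right a b)
    simpa using this
  have hne : ((a+b).choose a) ≠ 0 := (Nat.choose_pos (Nat.le_add_right a b)).ne'
  have hval : padicValNat 2 ((a+b).choose a) + padicValNat 2 (Nat.factorial a)
      + padicValNat 2 (Nat.factorial b) = padicValNat 2 (Nat.factorial (a+b)) := by
    rw [← hfac, padicValNat.mul (by positivity) (Nat.factorial_ne_zero b),
      padicValNat.mul hne (Nat.factorial_ne_zero a)]
  have h1 := s_fact a
  have h2 := s_fact b
  have h3 := s_fact (a+b)
  omega

private lemma s_add_le (a b : ℕ) : s (a+b) ≤ s a + s b := by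
  have := nu_choose a b; omega

private lemma s1 : s 1 = 1 := by
  have h := s_odd 0
  have h0 : s 0 = 0 := by simp [s]
  rw [show (1:ℕ) = 2*0+1 from rfl, h, h0]
private lemma s2 : s 2 = 1 := by have := s_even 1; simp only [mul_one] at this; rw [this, s1]
private lemma s4 : s 4 = 1 := by
  have := s_even 2; rw [show 2*2 = 4 from rfl] at this; rw [this, s2]

private lemma s8k5 (k : ℕ) : s (8*k+5) = s k + 2 := by
  rw [show 8*k+5 = 2*(2*(2*k+1))+1 from by ring, s_odd, s_even, s_odd]
private lemma s8k4 (k : ℕ) : s (8*k+4) = s k + 1 := by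
  rw [show 8*k+4 = 2*(2*(2*k+1)) from by ring, s_even, s_even, s_odd]
private lemma s8k3 (k : ℕ) : s (8*k+3) = s k + 2 := by
  rw [show 8*k+3 = 2*(2*(2*k)+1)+1 from by ring, s_odd, s_odd, s_even]
private lemma s8k1 (k : ℕ) : s (8*k+1) = s k + 1 := by
  rw [show 8*k+1 = 2*(2*(2*k))+1 from by ring, s_odd, s_even, s_even]
private lemma s16k3 (k : ℕ) : s (16*k+3) = s k + 2 := by
  rw [show 16*k+3 = 2*(8*k+1)+1 from by ring, s_odd, s8k1]
private lemma s8k (k : ℕ) : s (8*k) = s k := by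
  rw [show 8*k = 2*(2*(2*k)) from by ring, s_even, s_even, s_even]
private lemma s8k2 (k : ℕ) : s (8*k+2) = s k + 1 := by
  rw [show 8*k+2 = 2*(2*(2*k)+1) from by ring, s_even, s_odd, s_even]
private lemma s8j7 (j : ℕ) : s (8*j+7) = s j + 3 := by
  rw [show 8*j+7 = 2*(2*(2*j+1)+1)+1 from by ring, s_odd, s_odd, s_odd]

private lemma exact_pow {T e : ℕ} (hT : T ≠ 0) (h : padicValNat 2 T = e) :
    ∃ u, T = 2^e * u ∧ u % 2 = 1 := by
  have hd : 2^e ∣ T := h ▸ pow_padicValNat_dvd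
  refine ⟨T / 2^e, (Nat.mul_div_cancel' hd).symm, ?_⟩
  by_contra hodd
  have h2 : 2 ∣ T / 2^e := by omega
  obtain ⟨c, hc⟩ := h2
  have hdd : 2^(e+1) ∣ T := ⟨c, by rw [← Nat.mul_div_cancel' hd, hc]; ring⟩
  have := (padicValNat_dvd_iff_le (p := 2) hT).mp hdd
  omega

private lemma ge_pow {T e : ℕ} (hT : T ≠ 0) (h : e + 1 ≤ padicValNat 2 T) :
    ∃ u, T = 2^e * u ∧ u % 2 = 0 := by
  have hd : 2^(e+1) ∣ T := (padicValNat_dvd_iff_le (p := 2) hT).mpr h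
  obtain ⟨c, hc⟩ := hd
  exact ⟨2*c, by rw [hc]; ring, by omega⟩

/-- Condition (2) of Theorem 1.1 in case (a)(i) of Theorem 1.2: for `A ≡ 5 (mod 8)`
with `α(A) = 2^r + 2` and `m = A·2^r`, the sum `Σ C(m, m−ℓ₁)·C(2m−7·2^r, m−ℓ₂)` over
the six ordered pairs of distinct elements of `{2^r, 2^{r+1}, 2^{r+2}}` has
2-adic valuation `2^r`. -/
theorem stmt5 (r A : ℕ) (hA5 : A % 8 = 5) (hαA : (Nat.digits 2 A).sum = 2 ^ r + 2)
    (m : ℕ) (hm : m = A * 2 ^ r) :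
    padicValNat 2 (∑ p ∈ ({(2^r, 2^(r+1)), (2^r, 2^(r+2)), (2^(r+1), 2^r),
        (2^(r+1), 2^(r+2)), (2^(r+2), 2^r), (2^(r+2), 2^(r+1))} : Finset (ℕ × ℕ)),
      Nat.choose m (m - p.1) * Nat.choose (2 * m - 7 * 2 ^ r) (m - p.2)) = 2 ^ r := by
  obtain ⟨k, rfl⟩ : ∃ k, A = 8*k+5 := ⟨A/8, by omega⟩
  have hsA : s (8*k+5) = 2^r + 2 := hαA
  have hsk : s k = 2^r := by have := s8k5 k; omega
  have hpow1 : 1 ≤ 2^r := Nat.one_le_two_pow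
  have hk1 : 1 ≤ k := by
    by_contra h
    have hk0 : k = 0 := by omega
    rw [hk0] at hsk
    have : s 0 = 0 := by simp [s]
    omega
  obtain ⟨j, hkj⟩ : ∃ j, k = j+1 := ⟨k-1, by omega⟩
  rw [show (2:ℕ)^(r+1) = 2*2^r from by ring, show (2:ℕ)^(r+2) = 4*2^r from by ring]
  set E := (2:ℕ)^r with hEdef
  have hE1 : 1 ≤ E := hpow1
  have sE : ∀ c, s (c*E) = s c := fun c => by rw [hEdef]; exact s_mul_pow c r
  -- expand the sum
  rw [Finset.sum_insert (by simp only [Finset.mem_insert, Finset.mem_singleton, Prod.mk.injEq, true_and, and_true]; omega),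
      Finset.sum_insert (by simp only [Finset.mem_insert, Finset.mem_singleton, Prod.mk.injEq, true_and, and_true]; omega),
      Finset.sum_insert (by simp only [Finset.mem_insert, Finset.mem_singleton, Prod.mk.injEq, true_and, and_true]; omega),
      Finset.sum_insert (by simp only [Finset.mem_insert, Finset.mem_singleton, Prod.mk.injEq, true_and, and_true]; omega),
      Finset.sum_insert (by simp only [Finset.mem_singleton, Prod.mk.injEq, true_and, and_true]; omega),
      Finset.sum_singleton]
  dsimp only
  have e1 : m - E = (8*k+4)*E := by
    have : m = (8*k+4)*E + E := by rw [hm]; ring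
    omega
  have e2 : m - 2*E = (8*k+3)*E := by
    have : m = (8*k+3)*E + 2*E := by rw [hm]; ring
    omega
  have e3 : m - 4*E = (8*k+1)*E := by
    have : m = (8*k+1)*E + 4*E := by rw [hm]; ring
    omega
  have hn : 2*m - 7*E = (16*k+3)*E := by
    have : 2*m = (16*k+3)*E + 7*E := by rw [hm]; ring
    omega
  rw [e1, e2, e3, hn]
  have hsm : s m = s k + 2 := by rw [hm, show (8*k+5)*2^r = (8*k+5)*E from rfl, sE, s8k5]
  -- first-factor valuations
  have hB1 : padicValNat 2 (m.choose ((8*k+4)*E)) = 0 := by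
    have h := nu_choose ((8*k+4)*E) (1*E)
    rw [show (8*k+4)*E + 1*E = m from by rw [hm]; ring] at h
    rw [sE, sE, hsm, s8k4, s1] at h
    omega
  have hB2 : padicValNat 2 (m.choose ((8*k+3)*E)) = 1 := by
    have h := nu_choose ((8*k+3)*E) (2*E)
    rw [show (8*k+3)*E + 2*E = m from by rw [hm]; ring] at h
    rw [sE, sE, hsm, s8k3, s2] at h
    omega
  have hB3 : padicValNat 2 (m.choose ((8*k+1)*E)) = 0 := by
    have h := nu_choose ((8*k+1)*E) (4*E)
    rw [show (8*k+1)*E + 4*E = m from by rw [hm]; ring] at h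
    rw [sE, sE, hsm, s8k1, s4] at h
    omega
  -- second-factor valuations
  have hD1 : E + 1 ≤ padicValNat 2 (((16*k+3)*E).choose ((8*k+4)*E)) := by
    have h := nu_choose ((8*k+4)*E) ((8*j+7)*E)
    rw [show (8*k+4)*E + (8*j+7)*E = (16*k+3)*E from by rw [hkj]; ring] at h
    rw [sE, sE, sE, s16k3, s8k4, s8j7] at h
    have hb : s k ≤ s j + 1 := by
      have := s_add_le j 1; rw [← hkj] at this; rw [s1] at this; omega
    omega
  have hD2 : padicValNat 2 (((16*k+3)*E).choose ((8*k+3)*E)) = E := by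
    have h := nu_choose ((8*k+3)*E) (8*k*E)
    rw [show (8*k+3)*E + 8*k*E = (16*k+3)*E from by ring] at h
    rw [sE, sE, sE, s16k3, s8k3, s8k] at h
    omega
  have hD3 : padicValNat 2 (((16*k+3)*E).choose ((8*k+1)*E)) = E := by
    have h := nu_choose ((8*k+1)*E) ((8*k+2)*E)
    rw [show (8*k+1)*E + (8*k+2)*E = (16*k+3)*E from by ring] at h
    rw [sE, sE, sE, s16k3, s8k1, s8k2] at h
    omega
  -- nonvanishing
  have hmB : ∀ c : ℕ, c*E ≤ m → m.choose (c*E) ≠ 0 := fun c hc => (Nat.choose_pos hc).ne'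
  have hB1n : m.choose ((8*k+4)*E) ≠ 0 := hmB _ (Nat.le.intro (show (8*k+4)*E + E = m from by rw [hm]; ring))
  have hB2n : m.choose ((8*k+3)*E) ≠ 0 := hmB _ (Nat.le.intro (show (8*k+3)*E + 2*E = m from by rw [hm]; ring))
  have hB3n : m.choose ((8*k+1)*E) ≠ 0 := hmB _ (Nat.le.intro (show (8*k+1)*E + 4*E = m from by rw [hm]; ring))
  have hD1n : ((16*k+3)*E).choose ((8*k+4)*E) ≠ 0 :=
    (Nat.choose_pos (Nat.mul_le_mul_right E (by omega))).ne'
  have hD2n : ((16*k+3)*E).choose ((8*k+3)*E) ≠ 0 :=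
    (Nat.choose_pos (Nat.mul_le_mul_right E (by omega))).ne'
  have hD3n : ((16*k+3)*E).choose ((8*k+1)*E) ≠ 0 :=
    (Nat.choose_pos (Nat.mul_le_mul_right E (by omega))).ne'
  -- term valuations
  have hT1 : padicValNat 2 (m.choose ((8*k+4)*E) * ((16*k+3)*E).choose ((8*k+3)*E)) = E := by
    rw [padicValNat.mul hB1n hD2n, hB1, hD2]; omega
  have hT2 : padicValNat 2 (m.choose ((8*k+4)*E) * ((16*k+3)*E).choose ((8*k+1)*E)) = E := by
    rw [padicValNat.mul hB1n hD3n, hB1, hD3]; omega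
  have hT3 : E + 1 ≤ padicValNat 2 (m.choose ((8*k+3)*E) * ((16*k+3)*E).choose ((8*k+4)*E)) := by
    rw [padicValNat.mul hB2n hD1n, hB2]; omega
  have hT4 : E + 1 ≤ padicValNat 2 (m.choose ((8*k+3)*E) * ((16*k+3)*E).choose ((8*k+1)*E)) := by
    rw [padicValNat.mul hB2n hD3n, hB2, hD3]; omega
  have hT5 : E + 1 ≤ padicValNat 2 (m.choose ((8*k+1)*E) * ((16*k+3)*E).choose ((8*k+4)*E)) := by
    rw [padicValNat.mul hB3n hD1n, hB3]; omega
  have hT6 : padicValNat 2 (m.choose ((8*k+1)*E) * ((16*k+3)*E).choose ((8*k+3)*E)) = E := by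
    rw [padicValNat.mul hB3n hD2n, hB3, hD2]; omega
  obtain ⟨u1, hu1, hp1⟩ := exact_pow (mul_ne_zero hB1n hD2n) hT1
  obtain ⟨u2, hu2, hp2⟩ := exact_pow (mul_ne_zero hB1n hD3n) hT2
  obtain ⟨u3, hu3, hp3⟩ := ge_pow (mul_ne_zero hB2n hD1n) hT3
  obtain ⟨u4, hu4, hp4⟩ := ge_pow (mul_ne_zero hB2n hD3n) hT4
  obtain ⟨u5, hu5, hp5⟩ := ge_pow (mul_ne_zero hB3n hD1n) hT5
  obtain ⟨u6, hu6, hp6⟩ := exact_pow (mul_ne_zero hB3n hD2n) hT6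
  rw [hu1, hu2, hu3, hu4, hu5, hu6,
    show 2^E*u1 + (2^E*u2 + (2^E*u3 + (2^E*u4 + (2^E*u5 + 2^E*u6))))
      = 2^E * (u1+u2+u3+u4+u5+u6) from by ring]
  have hU1 : (u1+u2+u3+u4+u5+u6) % 2 = 1 := by omega
  rw [padicValNat.mul (pow_ne_zero E two_ne_zero) (by omega),
    padicValNat.prime_pow, padicValNat.eq_zero_of_not_dvd (by omega)]
  omega
end

section
/- Let r ≥ 0 and let A ≥ 4 be an integer with A ≡ 2 (mod 4) and α(A) = 2^r + 2, and set m = A·2^r. Then ν₂( Σ_{(ℓ₁,ℓ₂)} C(m, m−ℓ₁) · C(2m − 7·2^r, m−ℓ₂) ) = 2^r, where the sum ranges over the six ordered pairs (ℓ₁, ℓ₂) of distinct elements of the set {2^r, 2^{r+1}, 2^{r+2}}. -/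
lemma sd_two_mul (x : ℕ) (hx : x ≠ 0) :
    (Nat.digits 2 (2 * x)).sum = (Nat.digits 2 x).sum := by
  rw [Nat.digits_def' (by norm_num : (1:ℕ) < 2) (by omega)]
  rw [show 2 * x % 2 = 0 by omega, show 2 * x / 2 = x by omega]
  simp

lemma sd_two_mul_add_one (x : ℕ) :
    (Nat.digits 2 (2 * x + 1)).sum = (Nat.digits 2 x).sum + 1 := by
  rw [Nat.digits_def' (by norm_num : (1:ℕ) < 2) (by omega)]
  rw [show (2 * x + 1) % 2 = 1 by omega, show (2 * x + 1) / 2 = x by omega]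
  simp [add_comm]

lemma sd_pow_mul (x r : ℕ) (hx : x ≠ 0) :
    (Nat.digits 2 (x * 2 ^ r)).sum = (Nat.digits 2 x).sum := by
  induction r with
  | zero => simp
  | succ k ih =>
    rw [pow_succ, ← mul_assoc, show x * 2 ^ k * 2 = 2 * (x * 2 ^ k) by ring,
      sd_two_mul _ (by positivity), ih]

lemma sd_succ_le (k : ℕ) : (Nat.digits 2 (k + 1)).sum ≤ (Nat.digits 2 k).sum + 1 := by
  induction k using Nat.strong_induction_on with
  | _ k ih =>
    rcases Nat.even_or_odd k with ⟨j, hj⟩ | ⟨j, hj⟩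
    · rcases Nat.eq_zero_or_pos j with rfl | hj0
      · subst hj; simp
      · have h1 : k + 1 = 2 * j + 1 := by omega
        have h2 : k = 2 * j := by omega
        rw [h1, h2, sd_two_mul_add_one, sd_two_mul _ (by omega)]
    · have h1 : k + 1 = 2 * (j + 1) := by omega
      have h2 : k = 2 * j + 1 := by omega
      rw [h1, h2, sd_two_mul _ (by omega), sd_two_mul_add_one]
      have := ih j (by omega)
      omega

lemma kummer2 (N K : ℕ) (h : K ≤ N) :
    padicValNat 2 (N.choose K) =
      (Nat.digits 2 K).sum + (Nat.digits 2 (N - K)).sum - (Nat.digits 2 N).sum := by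
  have := sub_one_mul_padicValNat_choose_eq_sub_sum_digits (p := 2) h
  simpa using this

lemma val_eq_of_dvd (v x : ℕ) (h1 : 2 ^ v ∣ x) (h2 : ¬ 2 ^ (v + 1) ∣ x) :
    padicValNat 2 x = v := by
  have hx : x ≠ 0 := by rintro rfl; exact h2 (dvd_zero _)
  have ha := (padicValNat_dvd_iff_le (p := 2) (n := v) hx).mp h1
  have hb : ¬ (v + 1 ≤ padicValNat 2 x) := fun h =>
    h2 ((padicValNat_dvd_iff_le (p := 2) hx).mpr h)
  omega

lemma dvd_of_val_ge (k x : ℕ) (h : k ≤ padicValNat 2 x) : 2 ^ k ∣ x :=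
  (pow_dvd_pow 2 h).trans pow_padicValNat_dvd

lemma dvd_succ_of_val_eq (v x y : ℕ) (hx : padicValNat 2 x = v) (hx0 : x ≠ 0)
    (hy : padicValNat 2 y = v) (hy0 : y ≠ 0) : 2 ^ (v + 1) ∣ x + y := by
  obtain ⟨a, ha⟩ : 2 ^ v ∣ x := hx ▸ pow_padicValNat_dvd
  obtain ⟨b, hb⟩ : 2 ^ v ∣ y := hy ▸ pow_padicValNat_dvd
  have hnx : ¬ 2 ^ (v + 1) ∣ x := by
    rw [← hx]; exact pow_succ_padicValNat_not_dvd hx0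
  have hny : ¬ 2 ^ (v + 1) ∣ y := by
    rw [← hy]; exact pow_succ_padicValNat_not_dvd hy0
  have ha2 : a % 2 = 1 := by
    rcases Nat.even_or_odd a with ⟨c, hc⟩ | hodd
    · exact absurd ⟨c, by rw [ha, hc, pow_succ]; ring⟩ hnx
    · exact Nat.odd_iff.mp hodd
  have hb2 : b % 2 = 1 := by
    rcases Nat.even_or_odd b with ⟨c, hc⟩ | hodd
    · exact absurd ⟨c, by rw [hb, hc, pow_succ]; ring⟩ hny
    · exact Nat.odd_iff.mp hodd
  obtain ⟨c, hc⟩ : 2 ∣ (a + b) := by omega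
  exact ⟨c, by rw [ha, hb, ← mul_add, hc, pow_succ]; ring⟩

lemma val_add_of_dvd (v x y : ℕ) (hx : padicValNat 2 x = v) (hx0 : x ≠ 0)
    (hy : 2 ^ (v + 1) ∣ y) : padicValNat 2 (x + y) = v := by
  have hdx : 2 ^ v ∣ x := hx ▸ pow_padicValNat_dvd
  have hnx : ¬ 2 ^ (v + 1) ∣ x := by
    rw [← hx]; exact pow_succ_padicValNat_not_dvd hx0
  refine val_eq_of_dvd _ _ (dvd_add hdx ((pow_dvd_pow 2 (Nat.le_succ v)).trans hy)) ?_
  intro h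
  exact hnx (by simpa using Nat.dvd_sub h hy)

/-- Condition (2) of Theorem 1.1 in case (a)(ii) of Theorem 1.2: for `A ≥ 4` with
`A ≡ 2 (mod 4)`, `α(A) = 2^r + 2`, and `m = A·2^r`, the sum
`Σ C(m, m−ℓ₁)·C(2m−7·2^r, m−ℓ₂)` over the six ordered pairs of distinct elements of
`{2^r, 2^{r+1}, 2^{r+2}}` has 2-adic valuation `2^r`. -/
theorem stmt6 (r A : ℕ) (hA4 : 4 ≤ A) (hA2 : A % 4 = 2)
    (hαA : (Nat.digits 2 A).sum = 2 ^ r + 2) (m : ℕ) (hm : m = A * 2 ^ r) :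
    padicValNat 2 (∑ p ∈ ({(2^r, 2^(r+1)), (2^r, 2^(r+2)), (2^(r+1), 2^r),
        (2^(r+1), 2^(r+2)), (2^(r+2), 2^r), (2^(r+2), 2^(r+1))} : Finset (ℕ × ℕ)),
      Nat.choose m (m - p.1) * Nat.choose (2 * m - 7 * 2 ^ r) (m - p.2)) = 2 ^ r := by
  have hX : (1:ℕ) ≤ 2 ^ r := Nat.one_le_two_pow
  have s1 : (Nat.digits 2 1).sum = 1 := by simpa using sd_two_mul_add_one 0
  obtain ⟨q, rfl⟩ : ∃ q, A = 4 * q + 2 := ⟨A / 4, by omega⟩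
  have hsq : (Nat.digits 2 q).sum = 2 ^ r + 1 := by
    rw [show 4 * q + 2 = 2 * (2 * q + 1) by ring, sd_two_mul _ (by omega),
      sd_two_mul_add_one] at hαA
    omega
  have hq2 : 2 ≤ q := by
    by_contra h
    push_neg at h
    interval_cases q <;> simp_all <;> omega
  obtain ⟨u, rfl⟩ : ∃ u, q = u + 2 := ⟨q - 2, by omega⟩
  subst hm
  have ht : 2 ^ r ≤ (Nat.digits 2 (u + 1)).sum := by
    have h1 := sd_succ_le (u + 1)
    have h2 : u + 1 + 1 = u + 2 := by omega
    rw [h2] at h1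
    omega
  -- power facts
  have p1 : (2:ℕ) ^ r < 2 ^ (r + 1) := by
    have : (2:ℕ) ^ (r + 1) = 2 * 2 ^ r := by ring
    omega
  have p2 : (2:ℕ) ^ (r + 1) < 2 ^ (r + 2) := by
    have h1 : (2:ℕ) ^ (r + 1) = 2 * 2 ^ r := by ring
    have h2 : (2:ℕ) ^ (r + 2) = 4 * 2 ^ r := by ring
    omega
  -- expand the sum
  rw [Finset.sum_insert (by simp [Prod.ext_iff]; try omega),
    Finset.sum_insert (by simp [Prod.ext_iff]; try omega),
    Finset.sum_insert (by simp [Prod.ext_iff]; try omega),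
    Finset.sum_insert (by simp [Prod.ext_iff]; try omega),
    Finset.sum_insert (by simp [Prod.ext_iff]; try omega),
    Finset.sum_singleton]
  -- canonical forms of the arguments
  have g1 : (4 * (u + 2) + 2) * 2 ^ r = (4 * u + 10) * 2 ^ r := by ring
  rw [g1]
  have g2 : (4 * u + 10) * 2 ^ r - 2 ^ r = (4 * u + 9) * 2 ^ r := by
    have : (4 * u + 10) * 2 ^ r = (4 * u + 9) * 2 ^ r + 2 ^ r := by ring
    omega
  have g3 : (4 * u + 10) * 2 ^ r - 2 ^ (r + 1) = (4 * u + 8) * 2 ^ r := by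
    have : (4 * u + 10) * 2 ^ r = (4 * u + 8) * 2 ^ r + 2 ^ (r + 1) := by ring
    omega
  have g4 : (4 * u + 10) * 2 ^ r - 2 ^ (r + 2) = (4 * u + 6) * 2 ^ r := by
    have : (4 * u + 10) * 2 ^ r = (4 * u + 6) * 2 ^ r + 2 ^ (r + 2) := by ring
    omega
  have g5 : 2 * ((4 * u + 10) * 2 ^ r) - 7 * 2 ^ r = (8 * u + 13) * 2 ^ r := by
    have : 2 * ((4 * u + 10) * 2 ^ r) = (8 * u + 13) * 2 ^ r + 7 * 2 ^ r := by ring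
    omega
  rw [g2, g3, g4, g5]
  -- difference identities
  have d1 : (4 * u + 10) * 2 ^ r - (4 * u + 9) * 2 ^ r = 2 ^ r := by
    have : (4 * u + 10) * 2 ^ r = (4 * u + 9) * 2 ^ r + 2 ^ r := by ring
    omega
  have d2 : (4 * u + 10) * 2 ^ r - (4 * u + 8) * 2 ^ r = 2 * 2 ^ r := by
    have : (4 * u + 10) * 2 ^ r = (4 * u + 8) * 2 ^ r + 2 * 2 ^ r := by ring
    omega
  have e1 : (8 * u + 13) * 2 ^ r - (4 * u + 9) * 2 ^ r = (4 * u + 4) * 2 ^ r := by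
    have : (8 * u + 13) * 2 ^ r = (4 * u + 9) * 2 ^ r + (4 * u + 4) * 2 ^ r := by ring
    omega
  have e2 : (8 * u + 13) * 2 ^ r - (4 * u + 8) * 2 ^ r = (4 * u + 5) * 2 ^ r := by
    have : (8 * u + 13) * 2 ^ r = (4 * u + 8) * 2 ^ r + (4 * u + 5) * 2 ^ r := by ring
    omega
  have e3 : (8 * u + 13) * 2 ^ r - (4 * u + 6) * 2 ^ r = (4 * u + 7) * 2 ^ r := by
    have : (8 * u + 13) * 2 ^ r = (4 * u + 6) * 2 ^ r + (4 * u + 7) * 2 ^ r := by ring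
    omega
  -- digit sums
  have Sm : (Nat.digits 2 ((4 * u + 10) * 2 ^ r)).sum = 2 ^ r + 2 := by
    rw [sd_pow_mul _ _ (by omega), show 4 * u + 10 = 2 * (2 * (u + 2) + 1) by ring,
      sd_two_mul _ (by omega), sd_two_mul_add_one, hsq]
  have Sa : (Nat.digits 2 ((4 * u + 9) * 2 ^ r)).sum = 2 ^ r + 2 := by
    rw [sd_pow_mul _ _ (by omega), show 4 * u + 9 = 2 * (2 * (u + 2)) + 1 by ring,
      sd_two_mul_add_one, sd_two_mul _ (by omega), hsq]
  have Sb : (Nat.digits 2 ((4 * u + 8) * 2 ^ r)).sum = 2 ^ r + 1 := by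
    rw [sd_pow_mul _ _ (by omega), show 4 * u + 8 = 2 * (2 * (u + 2)) by ring,
      sd_two_mul _ (by omega), sd_two_mul _ (by omega), hsq]
  have Sc : (Nat.digits 2 ((4 * u + 6) * 2 ^ r)).sum = (Nat.digits 2 (u + 1)).sum + 1 := by
    rw [sd_pow_mul _ _ (by omega), show 4 * u + 6 = 2 * (2 * (u + 1) + 1) by ring,
      sd_two_mul _ (by omega), sd_two_mul_add_one]
  have Sn : (Nat.digits 2 ((8 * u + 13) * 2 ^ r)).sum = (Nat.digits 2 (u + 1)).sum + 2 := by
    rw [sd_pow_mul _ _ (by omega), show 8 * u + 13 = 2 * (2 * (2 * (u + 1) + 1)) + 1 by ring,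
      sd_two_mul_add_one, sd_two_mul _ (by omega), sd_two_mul_add_one]
  have Sd : (Nat.digits 2 ((4 * u + 4) * 2 ^ r)).sum = (Nat.digits 2 (u + 1)).sum := by
    rw [sd_pow_mul _ _ (by omega), show 4 * u + 4 = 2 * (2 * (u + 1)) by ring,
      sd_two_mul _ (by omega), sd_two_mul _ (by omega)]
  have Se : (Nat.digits 2 ((4 * u + 5) * 2 ^ r)).sum = (Nat.digits 2 (u + 1)).sum + 1 := by
    rw [sd_pow_mul _ _ (by omega), show 4 * u + 5 = 2 * (2 * (u + 1)) + 1 by ring,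
      sd_two_mul_add_one, sd_two_mul _ (by omega)]
  have Sf : (Nat.digits 2 ((4 * u + 7) * 2 ^ r)).sum = (Nat.digits 2 (u + 1)).sum + 2 := by
    rw [sd_pow_mul _ _ (by omega), show 4 * u + 7 = 2 * (2 * (u + 1) + 1) + 1 by ring,
      sd_two_mul_add_one, sd_two_mul_add_one]
  have Sx : (Nat.digits 2 (2 ^ r)).sum = 1 := by
    have := sd_pow_mul 1 r one_ne_zero
    simpa [s1] using this
  have Sy : (Nat.digits 2 (2 * 2 ^ r)).sum = 1 := by
    rw [sd_two_mul _ (by omega), Sx]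
  -- le facts
  have L1 : (4 * u + 9) * 2 ^ r ≤ (4 * u + 10) * 2 ^ r := Nat.mul_le_mul_right _ (by omega)
  have L2 : (4 * u + 8) * 2 ^ r ≤ (4 * u + 10) * 2 ^ r := Nat.mul_le_mul_right _ (by omega)
  have L3 : (4 * u + 6) * 2 ^ r ≤ (4 * u + 10) * 2 ^ r := Nat.mul_le_mul_right _ (by omega)
  have L4 : (4 * u + 9) * 2 ^ r ≤ (8 * u + 13) * 2 ^ r := Nat.mul_le_mul_right _ (by omega)
  have L5 : (4 * u + 8) * 2 ^ r ≤ (8 * u + 13) * 2 ^ r := Nat.mul_le_mul_right _ (by omega)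
  have L6 : (4 * u + 6) * 2 ^ r ≤ (8 * u + 13) * 2 ^ r := Nat.mul_le_mul_right _ (by omega)
  -- nonzeroness
  have n10 : Nat.choose ((4 * u + 10) * 2 ^ r) ((4 * u + 9) * 2 ^ r) ≠ 0 :=
    (Nat.choose_pos L1).ne'
  have n11 : Nat.choose ((4 * u + 10) * 2 ^ r) ((4 * u + 8) * 2 ^ r) ≠ 0 :=
    (Nat.choose_pos L2).ne'
  have n12 : Nat.choose ((4 * u + 10) * 2 ^ r) ((4 * u + 6) * 2 ^ r) ≠ 0 :=
    (Nat.choose_pos L3).ne'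
  have n20 : Nat.choose ((8 * u + 13) * 2 ^ r) ((4 * u + 9) * 2 ^ r) ≠ 0 :=
    (Nat.choose_pos L4).ne'
  have n21 : Nat.choose ((8 * u + 13) * 2 ^ r) ((4 * u + 8) * 2 ^ r) ≠ 0 :=
    (Nat.choose_pos L5).ne'
  have n22 : Nat.choose ((8 * u + 13) * 2 ^ r) ((4 * u + 6) * 2 ^ r) ≠ 0 :=
    (Nat.choose_pos L6).ne'
  -- valuations of the six binomials
  have hva : padicValNat 2 (Nat.choose ((4 * u + 10) * 2 ^ r) ((4 * u + 9) * 2 ^ r)) = 1 := by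
    rw [kummer2 _ _ L1, d1, Sa, Sx, Sm]; omega
  have hvb : padicValNat 2 (Nat.choose ((4 * u + 10) * 2 ^ r) ((4 * u + 8) * 2 ^ r)) = 0 := by
    rw [kummer2 _ _ L2, d2, Sb, Sy, Sm]; omega
  have hw0 : padicValNat 2 (Nat.choose ((8 * u + 13) * 2 ^ r) ((4 * u + 9) * 2 ^ r))
      = 2 ^ r := by
    rw [kummer2 _ _ L4, e1, Sa, Sd, Sn]; omega
  have hw1 : padicValNat 2 (Nat.choose ((8 * u + 13) * 2 ^ r) ((4 * u + 8) * 2 ^ r))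
      = 2 ^ r := by
    rw [kummer2 _ _ L5, e2, Sb, Se, Sn]; omega
  have hw2 : padicValNat 2 (Nat.choose ((8 * u + 13) * 2 ^ r) ((4 * u + 6) * 2 ^ r))
      = (Nat.digits 2 (u + 1)).sum + 1 := by
    rw [kummer2 _ _ L6, e3, Sc, Sf, Sn]; omega
  -- abbreviations
  set c10 := Nat.choose ((4 * u + 10) * 2 ^ r) ((4 * u + 9) * 2 ^ r) with hc10
  set c11 := Nat.choose ((4 * u + 10) * 2 ^ r) ((4 * u + 8) * 2 ^ r) with hc11
  set c12 := Nat.choose ((4 * u + 10) * 2 ^ r) ((4 * u + 6) * 2 ^ r) with hc12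
  set d10 := Nat.choose ((8 * u + 13) * 2 ^ r) ((4 * u + 9) * 2 ^ r) with hd10
  set d11 := Nat.choose ((8 * u + 13) * 2 ^ r) ((4 * u + 8) * 2 ^ r) with hd11
  set d12 := Nat.choose ((8 * u + 13) * 2 ^ r) ((4 * u + 6) * 2 ^ r) with hd12
  rw [show c10 * d11 + (c10 * d12 + (c11 * d10 + (c11 * d12 + (c12 * d10 + c12 * d11))))
      = c11 * d10 + (c10 * d11 + (c10 * d12 + (c11 * d12 + c12 * (d10 + d11)))) by ring]
  apply val_add_of_dvd
  · rw [padicValNat.mul n11 n20, hvb, hw0]; omega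
  · exact Nat.mul_ne_zero n11 n20
  · refine dvd_add ?_ (dvd_add ?_ (dvd_add ?_ ?_))
    · refine dvd_of_val_ge _ _ ?_
      rw [padicValNat.mul n10 n21, hva, hw1]
      omega
    · refine dvd_of_val_ge _ _ ?_
      rw [padicValNat.mul n10 n22, hva, hw2]
      omega
    · refine dvd_of_val_ge _ _ ?_
      rw [padicValNat.mul n11 n22, hvb, hw2]
      omega
    · exact Dvd.dvd.mul_left (dvd_succ_of_val_eq _ _ _ hw0 n20 hw1 n21) _
end

section
/- Let r ≥ 0 and let A ≥ 4 be an integer with α(A) = 2^r + 2 such that either A ≡ 5 (mod 8) or A ≡ 2 (mod 4), and set m = A·2^r. Then for every integer j with m − 7·2^r ≤ j ≤ m, one has ν₂( C(2m − 7·2^r, j) ) ≥ 2^r. -/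
namespace Stmt7Aux

/-- binary digit sum -/
def α (n : ℕ) : ℕ := (Nat.digits 2 n).sum

lemma alpha_rec {n : ℕ} (hn : 0 < n) : α n = n % 2 + α (n / 2) := by
  unfold α; rw [Nat.digits_def' (by norm_num : (1:ℕ) < 2) hn]; simp

lemma alpha_zero : α 0 = 0 := by simp [α]
lemma alpha_one : α 1 = 1 := by simp [α]

lemma alpha_two_mul (n : ℕ) : α (2 * n) = α n := by
  rcases Nat.eq_zero_or_pos n with rfl | hn
  · simp [α]
  · rw [alpha_rec (by omega)]
    simp [Nat.mul_div_cancel_left _ (by norm_num : 0 < 2), Nat.mul_mod_right]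

lemma alpha_two_mul_add_one (n : ℕ) : α (2 * n + 1) = α n + 1 := by
  rw [alpha_rec (by omega)]
  have h1 : (2 * n + 1) % 2 = 1 := by omega
  have h2 : (2 * n + 1) / 2 = n := by omega
  rw [h1, h2]; omega

lemma alpha_split (a b k : ℕ) (hb : b < 2 ^ k) : α (a * 2 ^ k + b) = α a + α b := by
  induction k generalizing b with
  | zero =>
    interval_cases b
    simp [alpha_zero]
  | succ k ih =>
    rcases Nat.even_or_odd b with ⟨c, hc⟩ | ⟨c, hc⟩
    · have h1 : a * 2 ^ (k + 1) + b = 2 * (a * 2 ^ k + c) := by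
        subst hc; ring
      have h2 : c < 2 ^ k := by
        have : (2:ℕ)^(k+1) = 2 * 2^k := by ring
        omega
      rw [h1, alpha_two_mul, ih c h2, hc, ← two_mul, alpha_two_mul]
    · have h1 : a * 2 ^ (k + 1) + b = 2 * (a * 2 ^ k + c) + 1 := by
        subst hc; ring
      have h2 : c < 2 ^ k := by
        have : (2:ℕ)^(k+1) = 2 * 2^k := by ring
        omega
      rw [h1, alpha_two_mul_add_one, ih c h2, hc, alpha_two_mul_add_one]
      omega

lemma alpha_split' (a k b v : ℕ) (hv : v = a * 2 ^ k + b) (hb : b < 2 ^ k) :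
    α v = α a + α b := by rw [hv]; exact alpha_split a b k hb

lemma alpha_pos {n : ℕ} (hn : 0 < n) : 0 < α n := by
  induction n using Nat.strong_induction_on with
  | _ n ih =>
    rw [alpha_rec hn]
    rcases Nat.eq_zero_or_pos (n % 2) with h | h
    · have hd : 0 < n / 2 := by omega
      have := ih (n / 2) (by omega) hd
      omega
    · omega

lemma alpha_succ_le (n : ℕ) : α (n + 1) ≤ α n + 1 := by
  induction n using Nat.strong_induction_on with
  | _ n ih =>
    rcases Nat.even_or_odd n with ⟨c, hc⟩ | ⟨c, hc⟩
    · subst hc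
      rw [← two_mul, alpha_two_mul_add_one, alpha_two_mul]
    · subst hc
      have h1 : 2 * c + 1 + 1 = 2 * (c + 1) := by ring
      rw [h1, alpha_two_mul, alpha_two_mul_add_one]
      have := ih c (by omega)
      omega

lemma alpha_pred (n : ℕ) (hn : 0 < n) : α n ≤ α (n - 1) + 1 := by
  have := alpha_succ_le (n - 1)
  have h : n - 1 + 1 = n := by omega
  rw [h] at this; exact this

lemma alpha_pow (k : ℕ) : α (2 ^ k) = 1 := by
  have := alpha_split' 1 k 0 (2 ^ k) (by ring) (by positivity)
  rw [this, alpha_one, alpha_zero]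

lemma alpha_3pow (k : ℕ) : α (3 * 2 ^ k) = 2 := by
  have h : (3 : ℕ) * 2 ^ k = 1 * 2 ^ (k + 1) + 2 ^ k := by ring
  have hb : (2:ℕ) ^ k < 2 ^ (k + 1) := by
    have : (2:ℕ)^(k+1) = 2 * 2^k := by ring
    have : (0:ℕ) < 2^k := by positivity
    omega
  rw [alpha_split' 1 (k+1) (2^k) _ h hb, alpha_one, alpha_pow]

lemma alpha_5pow (k : ℕ) : α (5 * 2 ^ k) = 2 := by
  have h : (5 : ℕ) * 2 ^ k = 1 * 2 ^ (k + 2) + 2 ^ k := by ring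
  have hb : (2:ℕ) ^ k < 2 ^ (k + 2) := by
    have : (2:ℕ)^(k+2) = 4 * 2^k := by ring
    have : (0:ℕ) < 2^k := by positivity
    omega
  rw [alpha_split' 1 (k+2) (2^k) _ h hb, alpha_one, alpha_pow]

/-- values in `[3·2^k, 4·2^k)` have digit sum at least 2 -/
lemma alpha_ge2_a (k v : ℕ) (h1 : 3 * 2 ^ k ≤ v) (h2 : v < 4 * 2 ^ k) : 2 ≤ α v := by
  have e1 : (2:ℕ)^(k+1) = 2 * 2^k := by ring
  have hP : (0:ℕ) < 2^k := by positivity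
  have h : v = 1 * 2 ^ (k + 1) + (v - 2 * 2 ^ k) := by omega
  have hb : v - 2 * 2 ^ k < 2 ^ (k + 1) := by omega
  rw [alpha_split' 1 (k+1) _ v h hb, alpha_one]
  have : 0 < α (v - 2 * 2 ^ k) := alpha_pos (by omega)
  omega

/-- values in `[6·2^k, 8·2^k)` have digit sum at least 2 -/
lemma alpha_ge2_b (k v : ℕ) (h1 : 6 * 2 ^ k ≤ v) (h2 : v < 8 * 2 ^ k) : 2 ≤ α v := by
  have e2 : (2:ℕ)^(k+2) = 4 * 2^k := by ring
  have hP : (0:ℕ) < 2^k := by positivity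
  have h : v = 1 * 2 ^ (k + 2) + (v - 4 * 2 ^ k) := by omega
  have hb : v - 4 * 2 ^ k < 2 ^ (k + 2) := by omega
  rw [alpha_split' 1 (k+2) _ v h hb, alpha_one]
  have : 0 < α (v - 4 * 2 ^ k) := alpha_pos (by omega)
  omega

lemma pred_mul (B x : ℕ) (h : 1 ≤ B) : B * x = (B - 1) * x + x := by
  cases B with
  | zero => omega
  | succ b => simp [Nat.succ_sub_one, Nat.succ_mul]

/-- Case 1: A = 8B+5. -/
lemma bound1 (r B w w' : ℕ) (hB : α B = 2 ^ r) (hww : w + w' = 7 * 2 ^ r) :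
    α (B * 2 ^ (r + 4) + 3 * 2 ^ r) + 2 ^ r
      ≤ α (B * 2 ^ (r + 3) + 5 * 2 ^ r - w) + α (B * 2 ^ (r + 3) + 5 * 2 ^ r - w') := by
  have hP : (0:ℕ) < 2 ^ r := by positivity
  have e3 : (2:ℕ)^(r+3) = 8 * 2^r := by ring
  have e4 : (2:ℕ)^(r+4) = 16 * 2^r := by ring
  have hB1 : 1 ≤ B := by
    rcases Nat.eq_zero_or_pos B with rfl | h
    · rw [alpha_zero] at hB; omega
    · exact h
  have kB : B * 2 ^ (r + 3) = (B - 1) * 2 ^ (r + 3) + 2 ^ (r + 3) := pred_mul _ _ hB1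
  -- value of α at n
  have hn : α (B * 2 ^ (r + 4) + 3 * 2 ^ r) = 2 ^ r + 2 := by
    rw [alpha_split' B (r+4) (3 * 2^r) _ rfl (by omega), alpha_3pow, hB]
  rw [hn]
  have hBpred : 2 ^ r ≤ α (B - 1) + 1 := by
    have := alpha_pred B hB1; omega
  -- lower bound for x = m - w when w > 5P (and then w' determined)
  have hhi : ∀ v, 5 * 2 ^ r < v → v ≤ 7 * 2 ^ r →
      2 ^ r + 1 ≤ α (B * 2 ^ (r + 3) + 5 * 2 ^ r - v) := by
    intro v hv1 hv2
    have hd : B * 2 ^ (r + 3) + 5 * 2 ^ r - v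
        = (B - 1) * 2 ^ (r + 3) + (13 * 2 ^ r - v) := by omega
    have hb : 13 * 2 ^ r - v < 2 ^ (r + 3) := by omega
    rw [alpha_split' (B-1) (r+3) _ _ hd hb]
    have h2 : 2 ≤ α (13 * 2 ^ r - v) := alpha_ge2_b r _ (by omega) (by omega)
    omega
  -- lower bound for x = m - w when w ≤ 5P
  have hlo : ∀ v, v ≤ 5 * 2 ^ r →
      α (B * 2 ^ (r + 3) + 5 * 2 ^ r - v) = 2 ^ r + α (5 * 2 ^ r - v) := by
    intro v hv
    have hd : B * 2 ^ (r + 3) + 5 * 2 ^ r - v = B * 2 ^ (r + 3) + (5 * 2 ^ r - v) := by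
      omega
    rw [alpha_split' B (r+3) _ _ hd (by omega), hB]
  rcases le_or_gt w (5 * 2 ^ r) with hw5 | hw5
  · rcases le_or_gt w' (5 * 2 ^ r) with hw5' | hw5'
    · -- both small
      rw [hlo w hw5, hlo w' hw5']
      have hsum : (5 * 2 ^ r - w) + (5 * 2 ^ r - w') = 3 * 2 ^ r := by omega
      have h2 : 2 ≤ α (5 * 2 ^ r - w) + α (5 * 2 ^ r - w') := by
        rcases Nat.eq_zero_or_pos (5 * 2 ^ r - w) with h0 | h0
        · have : 5 * 2 ^ r - w' = 3 * 2 ^ r := by omega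
          rw [this, alpha_3pow]; omega
        · rcases Nat.eq_zero_or_pos (5 * 2 ^ r - w') with h0' | h0'
          · have : 5 * 2 ^ r - w = 3 * 2 ^ r := by omega
            rw [this, alpha_3pow]; omega
          · have := alpha_pos h0
            have := alpha_pos h0'
            omega
      omega
    · -- w small, w' large
      rw [hlo w hw5]
      have h1 : 0 < α (5 * 2 ^ r - w) := alpha_pos (by omega)
      have h2 := hhi w' hw5' (by omega)
      omega
  · -- w large, w' small
    have hw5' : w' ≤ 5 * 2 ^ r := by omega
    rw [hlo w' hw5']
    have h1 : 0 < α (5 * 2 ^ r - w') := alpha_pos (by omega)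
    have h2 := hhi w hw5 (by omega)
    omega

/-- Case 2: A = 4B+2. -/
lemma bound2 (r B w w' : ℕ) (hB : α B = 2 ^ r + 1) (hww : w + w' = 7 * 2 ^ r) :
    α ((B - 1) * 2 ^ (r + 3) + 5 * 2 ^ r) + 2 ^ r
      ≤ α (B * 2 ^ (r + 2) + 2 * 2 ^ r - w) + α (B * 2 ^ (r + 2) + 2 * 2 ^ r - w') := by
  have hP : (0:ℕ) < 2 ^ r := by positivity
  have e2 : (2:ℕ)^(r+2) = 4 * 2^r := by ring
  have e3 : (2:ℕ)^(r+3) = 8 * 2^r := by ring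
  have hB3 : 3 ≤ B := by
    by_contra h
    interval_cases B <;> simp [α] at hB <;> omega
  have k1 : B * 2 ^ (r + 2) = (B - 1) * 2 ^ (r + 2) + 2 ^ (r + 2) :=
    pred_mul _ _ (by omega)
  have k2 : (B - 1) * 2 ^ (r + 2) = (B - 2) * 2 ^ (r + 2) + 2 ^ (r + 2) := by
    have := pred_mul (B - 1) (2 ^ (r + 2)) (by omega)
    have hB12 : B - 1 - 1 = B - 2 := by omega
    rw [hB12] at this; exact this
  -- α of n
  have hn : α ((B - 1) * 2 ^ (r + 3) + 5 * 2 ^ r) = α (B - 1) + 2 := by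
    rw [alpha_split' (B-1) (r+3) (5 * 2^r) _ rfl (by omega), alpha_5pow]
  rw [hn]
  set t := α (B - 1) with ht
  have htlo : 2 ^ r ≤ t := by
    have := alpha_pred B (by omega); omega
  have ht2 : t ≤ α (B - 2) + 1 := by
    have := alpha_pred (B - 1) (by omega)
    have h : B - 1 - 1 = B - 2 := by omega
    rw [h] at this; exact this
  -- three range lemmas
  have hI : ∀ v, v ≤ 2 * 2 ^ r →
      α (B * 2 ^ (r + 2) + 2 * 2 ^ r - v) = 2 ^ r + 1 + α (2 * 2 ^ r - v) := by
    intro v hv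
    have hd : B * 2 ^ (r + 2) + 2 * 2 ^ r - v = B * 2 ^ (r + 2) + (2 * 2 ^ r - v) := by
      omega
    rw [alpha_split' B (r+2) _ _ hd (by omega), hB]
  have hII : ∀ v, 2 * 2 ^ r < v → v ≤ 6 * 2 ^ r →
      α (B * 2 ^ (r + 2) + 2 * 2 ^ r - v) = t + α (6 * 2 ^ r - v) := by
    intro v hv1 hv2
    have hd : B * 2 ^ (r + 2) + 2 * 2 ^ r - v
        = (B - 1) * 2 ^ (r + 2) + (6 * 2 ^ r - v) := by omega
    rw [alpha_split' (B-1) (r+2) _ _ hd (by omega)]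
  have hIII : ∀ v, 6 * 2 ^ r < v → v ≤ 7 * 2 ^ r →
      α (B - 2) + 2 ≤ α (B * 2 ^ (r + 2) + 2 * 2 ^ r - v) := by
    intro v hv1 hv2
    have hd : B * 2 ^ (r + 2) + 2 * 2 ^ r - v
        = (B - 2) * 2 ^ (r + 2) + (10 * 2 ^ r - v) := by omega
    rw [alpha_split' (B-2) (r+2) _ _ hd (by omega)]
    have h2 : 2 ≤ α (10 * 2 ^ r - v) := alpha_ge2_a r _ (by omega) (by omega)
    omega
  -- case analysis
  rcases le_or_gt w (2 * 2 ^ r) with hw1 | hw1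
  · rcases le_or_gt w' (6 * 2 ^ r) with hw2 | hw2
    · -- (I, II)
      have hw2' : 2 * 2 ^ r < w' := by omega
      rw [hI w hw1, hII w' hw2' hw2]
      have hpos : 0 < α (2 * 2 ^ r - w) + α (6 * 2 ^ r - w') := by
        rcases Nat.eq_zero_or_pos (2 * 2 ^ r - w) with h0 | h0
        · have : 0 < 6 * 2 ^ r - w' := by omega
          have := alpha_pos this; omega
        · have := alpha_pos h0; omega
      omega
    · -- (I, III)
      have hx : 2 ^ r + 2 ≤ α (B * 2 ^ (r + 2) + 2 * 2 ^ r - w) := by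
        rw [hI w hw1]
        have : 0 < α (2 * 2 ^ r - w) := alpha_pos (by omega)
        omega
      have hy := hIII w' hw2 (by omega)
      omega
  · rcases le_or_gt w' (2 * 2 ^ r) with hw2 | hw2
    · rcases le_or_gt w (6 * 2 ^ r) with hw3 | hw3
      · -- (II, I)
        rw [hII w hw1 hw3, hI w' hw2]
        have hpos : 0 < α (2 * 2 ^ r - w') + α (6 * 2 ^ r - w) := by
          rcases Nat.eq_zero_or_pos (2 * 2 ^ r - w') with h0 | h0
          · have : 0 < 6 * 2 ^ r - w := by omega
            have := alpha_pos this; omega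
          · have := alpha_pos h0; omega
        omega
      · -- (III, I)
        have hy : 2 ^ r + 2 ≤ α (B * 2 ^ (r + 2) + 2 * 2 ^ r - w') := by
          rw [hI w' hw2]
          have : 0 < α (2 * 2 ^ r - w') := alpha_pos (by omega)
          omega
        have hx := hIII w hw3 (by omega)
        omega
    · -- (II, II)
      have hw3 : w ≤ 6 * 2 ^ r := by omega
      have hw4 : w' ≤ 6 * 2 ^ r := by omega
      rw [hII w hw1 hw3, hII w' hw2 hw4]
      have h1 : 0 < α (6 * 2 ^ r - w) := alpha_pos (by omega)
      have h2 : 0 < α (6 * 2 ^ r - w') := alpha_pos (by omega)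
      omega

end Stmt7Aux

open Stmt7Aux in
/-- Condition (1) of Theorem 1.1 in the proof of Theorem 1.2(a): for `A ≥ 4` with
`α(A) = 2^r + 2` and `A ≡ 5 (mod 8)` or `A ≡ 2 (mod 4)`, setting `m = A·2^r`, every
`j` with `m − 7·2^r ≤ j ≤ m` satisfies `ν₂(C(2m − 7·2^r, j)) ≥ 2^r`. -/
theorem stmt7 (r A : ℕ) (hA : 4 ≤ A) (hαA : (Nat.digits 2 A).sum = 2 ^ r + 2)
    (hAmod : A % 8 = 5 ∨ A % 4 = 2) (m : ℕ) (hm : m = A * 2 ^ r)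
    (j : ℕ) (hj1 : m - 7 * 2 ^ r ≤ j) (hj2 : j ≤ m) :
    2 ^ r ≤ padicValNat 2 (Nat.choose (2 * m - 7 * 2 ^ r) j) := by
  have hP : (0:ℕ) < 2 ^ r := by positivity
  have hαA' : α A = 2 ^ r + 2 := hαA
  -- the key digit-sum bound, uniform over both congruence cases
  have key : α (2 * m - 7 * 2 ^ r) + 2 ^ r ≤ α j + α (2 * m - 7 * 2 ^ r - j) ∧
      7 * 2 ^ r ≤ m := by
    rcases hAmod with h8 | h4
    · -- A = 8B + 5
      obtain ⟨B, hA8⟩ : ∃ B, A = 8 * B + 5 := ⟨A / 8, by omega⟩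
      have hαB : α B = 2 ^ r := by
        have h : A = B * 2 ^ 3 + 5 := by omega
        have := alpha_split' B 3 5 A h (by norm_num)
        rw [this] at hαA'
        have h5 : α 5 = 2 := by simp [α]
        omega
      have hB1 : 1 ≤ B := by
        rcases Nat.eq_zero_or_pos B with rfl | h
        · rw [alpha_zero] at hαB; omega
        · exact h
      have hm' : m = B * 2 ^ (r + 3) + 5 * 2 ^ r := by rw [hm, hA8]; ring
      have hmge : 7 * 2 ^ r ≤ m := by
        have h8 : (2:ℕ) ^ (r + 3) ≤ B * 2 ^ (r + 3) := Nat.le_mul_of_pos_left _ hB1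
        have e3 : (2:ℕ)^(r+3) = 8 * 2^r := by ring
        omega
      have hn' : 2 * m - 7 * 2 ^ r = B * 2 ^ (r + 4) + 3 * 2 ^ r := by
        have h2m : 2 * m = B * 2 ^ (r + 4) + 10 * 2 ^ r := by rw [hm']; ring
        omega
      constructor
      · set w := m - j with hw
        set w' := 7 * 2 ^ r - w with hw'
        have hww : w + w' = 7 * 2 ^ r := by
          have : w ≤ 7 * 2 ^ r := by omega
          omega
        have hjw : j = B * 2 ^ (r + 3) + 5 * 2 ^ r - w := by omega
        have hyw : 2 * m - 7 * 2 ^ r - j = B * 2 ^ (r + 3) + 5 * 2 ^ r - w' := by omega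
        rw [hyw, hn', hjw]
        exact bound1 r B w w' hαB hww
      · exact hmge
    · -- A = 4B + 2
      obtain ⟨B, hA4⟩ : ∃ B, A = 4 * B + 2 := ⟨A / 4, by omega⟩
      have hαB : α B = 2 ^ r + 1 := by
        have h : A = B * 2 ^ 2 + 2 := by omega
        have := alpha_split' B 2 2 A h (by norm_num)
        rw [this] at hαA'
        have h2 : α 2 = 1 := by simp [α]
        omega
      have hB3 : 3 ≤ B := by
        by_contra h
        interval_cases B <;> simp [α] at hαB <;> omega
      have hm' : m = B * 2 ^ (r + 2) + 2 * 2 ^ r := by rw [hm, hA4]; ring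
      have hmge : 7 * 2 ^ r ≤ m := by
        have h4 : 3 * 2 ^ (r + 2) ≤ B * 2 ^ (r + 2) :=
          Nat.mul_le_mul_right _ hB3
        have e2 : (2:ℕ)^(r+2) = 4 * 2^r := by ring
        omega
      have hn' : 2 * m - 7 * 2 ^ r = (B - 1) * 2 ^ (r + 3) + 5 * 2 ^ r := by
        have h2m : 2 * m = B * 2 ^ (r + 3) + 4 * 2 ^ r := by rw [hm']; ring
        have kB : B * 2 ^ (r + 3) = (B - 1) * 2 ^ (r + 3) + 2 ^ (r + 3) :=
          pred_mul _ _ (by omega)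
        have e3 : (2:ℕ)^(r+3) = 8 * 2^r := by ring
        omega
      constructor
      · set w := m - j with hw
        set w' := 7 * 2 ^ r - w with hw'
        have hww : w + w' = 7 * 2 ^ r := by
          have : w ≤ 7 * 2 ^ r := by omega
          omega
        have hjw : j = B * 2 ^ (r + 2) + 2 * 2 ^ r - w := by omega
        have hyw : 2 * m - 7 * 2 ^ r - j = B * 2 ^ (r + 2) + 2 * 2 ^ r - w' := by omega
        rw [hyw, hn', hjw]
        exact bound2 r B w w' hαB hww
      · exact hmge
  obtain ⟨keyineq, hmge⟩ := key
  have hjn : j ≤ 2 * m - 7 * 2 ^ r := by omega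
  have bridge := sub_one_mul_padicValNat_choose_eq_sub_sum_digits (p := 2) hjn
  simp only [show (2:ℕ) - 1 = 1 from rfl, one_mul] at bridge
  have hb : padicValNat 2 (Nat.choose (2 * m - 7 * 2 ^ r) j)
      = α j + α (2 * m - 7 * 2 ^ r - j) - α (2 * m - 7 * 2 ^ r) := bridge
  omega
end

section
/- Let k ≥ 4, let r ≥ k − 3, let B ≥ 1, and set m = (8B+6)·2^r. Then for every integer j with m − (2^k − 1)·2^{r−k+3} ≤ j ≤ m, one has ν₂( C( 2m − (2^k − 1)·2^{r−k+3} , j ) ) ≥ α(B). -/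
/-!
By Kummer's theorem, `ν₂(C(n, j))` is at least the number of positions `i` with
`n mod 2^i < j mod 2^i`. Put `R = 2^r` and `a = 2^(r-k+3) ≤ R`. Then
`n = 2m - (2^k - 1)a = 16BR + 4R + a`, and `j` lies between `8BR - 2R + a` and `8BR + 6R`.
For a bit `b` of `B`, write `B = 2^b (2q + 1) + c` with `c < 2^b`. The residue of `n`
modulo `2^(r+4+b)` is `16Rc + 4R + a`, while that of `j` is at least `8R(2^b + c) - 2R + a`,
which is larger because `c < 2^b`. So every bit `b` of `B` contributes the position `r + 4 + b`.
-/

open Finset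

theorem Nat.sum_digits_two_eq_length_bitIndices (n : ℕ) :
    (Nat.digits 2 n).sum = n.bitIndices.length := by
  induction n using Nat.strongRecOn with
  | ind n ih =>
    rcases Nat.eq_zero_or_pos n with rfl | hn
    · simp
    rw [Nat.digits_def' one_lt_two hn, List.sum_cons, ih (n / 2) (by omega)]
    rcases Nat.mod_two_eq_zero_or_one n with h | h
    · conv_rhs => rw [← Nat.div_add_mod n 2, h, add_zero, Nat.bitIndices_two_mul]
      simp [h]
    · conv_rhs => rw [← Nat.div_add_mod n 2, h, Nat.bitIndices_two_mul_add_one]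
      simp [h, add_comm]

theorem Nat.le_mod_add_sub_mod_of_mod_lt_mod {n k M : ℕ} (hkn : k ≤ n)
    (h : n % M < k % M) : M ≤ k % M + (n - k) % M := by
  have hsum := Nat.add_mod_add_ite k (n - k) M
  rw [Nat.add_sub_cancel' hkn] at hsum
  split_ifs at hsum with hM
  · exact hM
  · omega

theorem card_le_padicValNat_choose {p n k : ℕ} [hp : Fact p.Prime] (hkn : k ≤ n)
    {s : Finset ℕ} (hs : ∀ i ∈ s, 0 < i ∧ n % p ^ i < k % p ^ i) :
    #s ≤ padicValNat p (n.choose k) := by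
  rw [padicValNat_choose hkn (Nat.lt_succ_self (Nat.log p n))]
  refine card_le_card fun i hi => ?_
  obtain ⟨hi0, hlt⟩ := hs i hi
  have hpow : p ^ i ≤ n := by
    by_contra! hn
    rw [Nat.mod_eq_of_lt hn] at hlt
    exact absurd ((Nat.mod_le k _).trans hkn) hlt.not_ge
  have hn0 : n ≠ 0 := (pow_pos hp.out.pos i).trans_le hpow |>.ne'
  rw [mem_filter, mem_Ico, Nat.lt_succ_iff, Nat.le_log_iff_pow_le hp.out.one_lt hn0]
  exact ⟨⟨hi0, hpow⟩, Nat.le_mod_add_sub_mod_of_mod_lt_mod hkn hlt⟩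

theorem Nat.exists_eq_two_pow_mul_add_of_testBit {B b : ℕ} (h : B.testBit b) :
    ∃ q c, c < 2 ^ b ∧ B = 2 ^ b * (2 * q + 1) + c := by
  refine ⟨B / 2 ^ b / 2, B % 2 ^ b, Nat.mod_lt _ (by positivity), ?_⟩
  have hodd : B / 2 ^ b % 2 = 1 := by
    simpa [Nat.testBit_eq_decide_div_mod_eq] using h
  conv_lhs => rw [← Nat.div_add_mod B (2 ^ b), ← Nat.div_add_mod (B / 2 ^ b) 2, hodd]

theorem mod_lt_mod_of_testBit {R a B b j : ℕ} (ha : a < 12 * R) (hB : B.testBit b)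
    (hj1 : 8 * B * R + a ≤ j + 2 * R) (hj2 : j ≤ 8 * B * R + 6 * R) :
    (16 * B * R + 4 * R + a) % (16 * R * 2 ^ b) < j % (16 * R * 2 ^ b) := by
  obtain ⟨q, c, hc, rfl⟩ := Nat.exists_eq_two_pow_mul_add_of_testBit hB
  set P := 2 ^ b
  have hcP : R * c + R ≤ R * P := Nat.mul_le_mul_left R hc
  have hn : 16 * (P * (2 * q + 1) + c) * R + 4 * R + a
      = 16 * R * P * (2 * q + 1) + (16 * R * c + 4 * R + a) := by ring
  obtain ⟨y, rfl⟩ : ∃ y, j = 16 * R * P * q + y :=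
    ⟨j - 16 * R * P * q, (Nat.add_sub_cancel' (by nlinarith)).symm⟩
  rw [hn, Nat.mul_add_mod, Nat.mul_add_mod, Nat.mod_eq_of_lt (by linarith),
    Nat.mod_eq_of_lt (by nlinarith)]
  nlinarith

theorem sum_digits_two_le_padicValNat_choose {r a B m j : ℕ} (ha : a < 12 * 2 ^ r)
    (hB : 1 ≤ B) (hm : m = (8 * B + 6) * 2 ^ r) (hj1 : m + a ≤ j + 8 * 2 ^ r) (hj2 : j ≤ m) :
    (Nat.digits 2 B).sum ≤ padicValNat 2 ((2 * m + a - 8 * 2 ^ r).choose j) := by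
  subst hm
  have hn : 2 * ((8 * B + 6) * 2 ^ r) + a - 8 * 2 ^ r = 16 * B * 2 ^ r + 4 * 2 ^ r + a :=
    Nat.sub_eq_of_eq_add (by ring)
  have hj1' : 8 * B * 2 ^ r + a ≤ j + 2 * 2 ^ r := by linarith
  have hj2' : j ≤ 8 * B * 2 ^ r + 6 * 2 ^ r := by linarith
  have hcarry : ∀ i ∈ B.bitIndices.toFinset.map (addLeftEmbedding (r + 4)),
      0 < i ∧ (16 * B * 2 ^ r + 4 * 2 ^ r + a) % 2 ^ i < j % 2 ^ i := by
    simp only [mem_map, List.mem_toFinset, Nat.mem_bitIndices, addLeftEmbedding_apply]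
    rintro _ ⟨b, hb, rfl⟩
    have hM : 2 ^ (r + 4 + b) = 16 * 2 ^ r * 2 ^ b := by ring
    exact ⟨by omega, hM ▸ mod_lt_mod_of_testBit ha hb hj1' hj2'⟩
  calc (Nat.digits 2 B).sum = #(B.bitIndices.toFinset.map (addLeftEmbedding (r + 4))) := by
        rw [card_map, List.toFinset_card_of_nodup Nat.bitIndices_nodup,
          Nat.sum_digits_two_eq_length_bitIndices]
    _ ≤ _ := hn ▸ card_le_padicValNat_choose (by nlinarith) hcarry

/-- Condition (1) of Theorem 1.1 in the proof of Theorem 1.2(b)(i): for `k ≥ 4`,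
`r ≥ k−3`, `B ≥ 1`, and `m = (8B+6)·2^r`, every `j` with
`m − (2^k−1)·2^{r−(k−3)} ≤ j ≤ m` satisfies
`ν₂(C(2m − (2^k−1)·2^{r−(k−3)}, j)) ≥ α(B)`. -/
theorem stmt8 (k r B : ℕ) (hk : 4 ≤ k) (hr : k - 3 ≤ r) (hB : 1 ≤ B)
    (m : ℕ) (hm : m = (8 * B + 6) * 2 ^ r)
    (j : ℕ) (hj1 : m - (2 ^ k - 1) * 2 ^ (r - (k - 3)) ≤ j) (hj2 : j ≤ m) :
    (Nat.digits 2 B).sum ≤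
      padicValNat 2 (Nat.choose (2 * m - (2 ^ k - 1) * 2 ^ (r - (k - 3))) j) := by
  set a := 2 ^ (r - (k - 3))
  have ha : a ≤ 2 ^ r := Nat.pow_le_pow_right two_pos (Nat.sub_le r (k - 3))
  have hd : (2 ^ k - 1) * a = 8 * 2 ^ r - a := by
    rw [Nat.sub_one_mul, ← pow_add, show k + (r - (k - 3)) = r + 3 by omega, pow_add]
    ring_nf
  clear_value a
  have ha12 : a < 12 * 2 ^ r := by linarith [Nat.one_le_two_pow (n := r)]
  have hm6 : 6 * 2 ^ r ≤ m := hm ▸ Nat.mul_le_mul_right _ (by omega)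
  rw [hd] at hj1 ⊢
  rw [show 2 * m - (8 * 2 ^ r - a) = 2 * m + a - 8 * 2 ^ r by omega]
  exact sum_digits_two_le_padicValNat_choose ha12 hB hm (by omega) hj2
end

section
/- Let k ≥ 3 be odd, let β be the multiplicative order of 2 modulo k (the smallest positive integer with k dividing 2^β − 1), and set m = (k−1)·(2^β − 1)/k. Then for all integers a ≥ 0 and b with 0 ≤ b < β, ⌊(k−1)·2^{aβ+b}/k⌋ = 2^b · m · (Σ_{i=0}^{a−1} 2^{iβ}) + ⌊m/2^{β−b}⌋. -/
/-- Lemma 4.2 (main assertion): for odd `k ≥ 3` with `β` the multiplicative order of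
2 mod `k` and `m = (k−1)(2^β−1)/k`, writing `t = aβ + b` with `0 ≤ b < β`,
`⌊(k−1)·2^t/k⌋ = 2^b·m·(Σ_{i<a} 2^{iβ}) + ⌊m/2^{β−b}⌋`. -/
theorem stmt11 (k : ℕ) (hk : 3 ≤ k) (hodd : Odd k) (β : ℕ) (hβpos : 0 < β)
    (hβdvd : k ∣ 2 ^ β - 1)
    (hβmin : ∀ β', 0 < β' → k ∣ 2 ^ β' - 1 → β ≤ β')
    (m : ℕ) (hm : k * m = (k - 1) * (2 ^ β - 1)) :
    ∀ a b : ℕ, b < β →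
      (k - 1) * 2 ^ (a * β + b) / k =
        2 ^ b * m * (∑ i ∈ Finset.range a, 2 ^ (i * β)) + m / 2 ^ (β - b) := by
  intro a b hb
  have hkpos : 0 < k := by omega
  have hk1 : 1 ≤ k := by omega
  have h2β : (1:ℕ) ≤ 2 ^ β := Nat.one_le_two_pow
  have h2aβ : (1:ℕ) ≤ 2 ^ (a * β) := Nat.one_le_two_pow
  have hb' : b ≤ β := hb.le
  set S : ℕ := ∑ i ∈ Finset.range a, 2 ^ (i * β) with hS
  -- geometric sum identity over ℤ
  have hgZ : ((2:ℤ) ^ β - 1) * (S:ℤ) = 2 ^ (a * β) - 1 := by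
    have h := geom_sum_mul ((2:ℤ) ^ β) a
    have hcast : ((S:ℤ)) = ∑ i ∈ Finset.range a, ((2:ℤ) ^ β) ^ i := by
      rw [hS]
      push_cast
      refine Finset.sum_congr rfl (fun i _ => ?_)
      rw [← pow_mul, Nat.mul_comm]
    rw [hcast, mul_comm, h, ← pow_mul, Nat.mul_comm]
  have hmZ : (k:ℤ) * m = ((k:ℤ) - 1) * (2 ^ β - 1) := by
    have := hm
    zify [h2β, hk1] at this
    exact this
  -- key identity
  have hkey : (k - 1) * 2 ^ (a * β + b) = (k - 1) * 2 ^ b + k * (2 ^ b * m * S) := by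
    zify [hk1]
    linear_combination (-(2 ^ b * (S:ℤ))) * hmZ + (-(2 ^ b * ((k:ℤ) - 1))) * hgZ
  rw [hkey, Nat.add_mul_div_left _ _ hkpos]
  -- now reduce to the b-digit claim
  have hdiv : m / 2 ^ (β - b) = (k - 1) * 2 ^ b / k := by
    set q := (k - 1) * 2 ^ b / k with hq
    set r := (k - 1) * 2 ^ b % k with hr
    have hqr : k * q + r = (k - 1) * 2 ^ b := Nat.div_add_mod _ k
    have hrlt : r < k := Nat.mod_lt _ hkpos
    have hmod2 : 2 ^ β % k = 1 := by
      obtain ⟨c, hc⟩ := hβdvd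
      have : 2 ^ β = k * c + 1 := by omega
      rw [this, Nat.mul_add_mod, Nat.mod_eq_of_lt (by omega)]
    -- key inequality : k - 1 ≤ r * 2 ^ (β - b)
    have hrk : k - 1 ≤ r * 2 ^ (β - b) := by
      have h1 : r * 2 ^ (β - b) % k = k - 1 := by
        calc r * 2 ^ (β - b) % k
            = ((k - 1) * 2 ^ b % k) * 2 ^ (β - b) % k := by rw [hr]
          _ = ((k - 1) * 2 ^ b) * 2 ^ (β - b) % k := by rw [Nat.mod_mul_mod]
          _ = (k - 1) * 2 ^ β % k := by
              rw [mul_assoc, ← pow_add, show b + (β - b) = β from by omega]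
          _ = ((k - 1) % k) * (2 ^ β % k) % k := Nat.mul_mod _ _ _
          _ = k - 1 := by
              rw [hmod2, mul_one, Nat.mod_mod_of_dvd _ (dvd_refl k),
                Nat.mod_eq_of_lt (by omega)]
      calc k - 1 = r * 2 ^ (β - b) % k := h1.symm
        _ ≤ r * 2 ^ (β - b) := Nat.mod_le _ _
    -- the exact equation for k*m
    have hkm2 : k * m + (k - 1) = (k * q + r) * 2 ^ (β - b) := by
      rw [hqr]
      zify [hk1]
      rw [mul_assoc, ← pow_add, show b + (β - b) = β from by omega]
      linear_combination hmZ
    have hdist : (k * q + r) * 2 ^ (β - b) = k * (q * 2 ^ (β - b)) + r * 2 ^ (β - b) := by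
      ring
    rw [hdist] at hkm2
    have hle : q * 2 ^ (β - b) ≤ m := by
      have hstep : k * (q * 2 ^ (β - b)) ≤ k * m := by omega
      exact Nat.le_of_mul_le_mul_left hstep hkpos
    have hlt : m < (q + 1) * 2 ^ (β - b) := by
      have hrP : r * 2 ^ (β - b) ≤ (k - 1) * 2 ^ (β - b) :=
        Nat.mul_le_mul_right _ (by omega)
      have hstep : k * m < k * ((q + 1) * 2 ^ (β - b)) := by
        have hexp : k * ((q + 1) * 2 ^ (β - b)) =
            k * (q * 2 ^ (β - b)) + (k - 1) * 2 ^ (β - b) + 2 ^ (β - b) := by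
          have h1 : (1:ℕ) ≤ 2 ^ (β - b) := Nat.one_le_two_pow
          zify [hk1, h1]
          ring
        have h1 : (1:ℕ) ≤ 2 ^ (β - b) := Nat.one_le_two_pow
        omega
      exact Nat.lt_of_mul_lt_mul_left hstep
    have := Nat.div_eq_of_lt_le hle hlt
    rw [this]
  rw [hdiv]
  omega
end

section
/- For integers k ≥ 3 and n ≥ 1, define L_k(n) = k·n − max( 2^{ν₂(n+1)} − 1 , max{ k·(n mod 2^t) − (k−1)·(2^t − 1) : t ≥ 2 and ⌊n/2^{t−2}⌋ ≡ 3 (mod 4) } ), where the inner maximum is over all integers t ≥ 2 such that the bits of n in positions t−1 and t−2 are both 1 (and this inner maximum is omitted, i.e. L_k(n) = k·n − (2^{ν₂(n+1)} − 1), if no such t exists). Then for all integers k ≥ 3 and e ≥ 2 and all n with ⌊(k−1)·2^e/k⌋ ≤ n ≤ 2^e − 1, one has L_k(n) = (k−1)·(2^e − 1). -/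
/-!
Write `T t = k·(n mod 2^t) − (k−1)(2^t − 1)` (`zclTerm k n t`), so that the claim is that the
maximum subtracted in `zclBound k n` is `T e`. The hypothesis on `n` says exactly that
`T e + 1 = k(n+1) − (k−1)2^e` is positive. Being also divisible by `2^{ν₂(n+1)}`, it bounds the
valuation term, and for `t < e` the inequality `T t ≤ T e` reduces to
`(k−1)(2^{e−t} − 1) ≤ k⌊n/2^t⌋`, which follows from the
same hypothesis after dividing by `2^t`.

Conversely `T e` occurs in the maximum. Either the top two bits of `n` are set and `t = e` is
admissible, or `k = 3` and `n = 2^{e−1} + m` with `m < 2^{e−2}`; then `T` for `(e, n)` equals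
`T` for `(e−2, m)`, every term for `m` is a term for `n`, and induction on `e` ends at
`n = 2^e − 1`, where `T e` is the valuation term.
-/

/-- `zclBound k n = k·n − max(2^{ν₂(n+1)} − 1, max_t (k·(n mod 2^t) − (k−1)(2^t−1)))`,
where the inner maximum is over all `t ≥ 2` such that `⌊n/2^{t−2}⌋ ≡ 3 (mod 4)`
(i.e. bits `t−1` and `t−2` of `n` are both 1); any such `t` satisfies
`t − 2 < 2^{t−2} ≤ n`, hence `t < n + 3`, so the range `Finset.range (n+3)` captures
all of them.  If no such `t` exists, only the term `2^{ν₂(n+1)} − 1` remains. -/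
def zclBound (k n : ℕ) : ℤ :=
  (k : ℤ) * n -
    (insert ((2 : ℤ) ^ padicValNat 2 (n + 1) - 1)
      (((Finset.range (n + 3)).filter
          (fun t => 2 ≤ t ∧ n / 2 ^ (t - 2) % 4 = 3)).image
        (fun t => (k : ℤ) * (n % 2 ^ t) - ((k : ℤ) - 1) * (2 ^ t - 1)))).max'
      (Finset.insert_nonempty _ _)

def zclTerm (k n t : ℕ) : ℤ := (k : ℤ) * (n % 2 ^ t) - ((k : ℤ) - 1) * (2 ^ t - 1)

def zclSet (k n : ℕ) : Finset ℤ :=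
  insert ((2 : ℤ) ^ padicValNat 2 (n + 1) - 1)
    (((Finset.range (n + 3)).filter (fun t => 2 ≤ t ∧ n / 2 ^ (t - 2) % 4 = 3)).image
      (zclTerm k n))

theorem zclBound_eq_sub_max' (k n : ℕ) :
    zclBound k n = k * n - (zclSet k n).max' (Finset.insert_nonempty _ _) :=
  rfl

theorem mem_zclSet {k n : ℕ} {y : ℤ} :
    y ∈ zclSet k n ↔ y = 2 ^ padicValNat 2 (n + 1) - 1 ∨
      ∃ t, 2 ≤ t ∧ n / 2 ^ (t - 2) % 4 = 3 ∧ zclTerm k n t = y := by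
  simp only [zclSet, Finset.mem_insert, Finset.mem_image, Finset.mem_filter, Finset.mem_range]
  refine or_congr_right ⟨fun ⟨t, ⟨_, ht⟩, hy⟩ => ⟨t, ht.1, ht.2, hy⟩,
    fun ⟨t, ht, hbits, hy⟩ => ⟨t, ⟨?_, ht, hbits⟩, hy⟩⟩
  have : 2 ^ (t - 2) ≤ n := by
    by_contra! h
    simp [Nat.div_eq_of_lt h] at hbits
  have := (t - 2).lt_two_pow_self
  omega

theorem zclTerm_of_lt {k n t : ℕ} (hn : n < 2 ^ t) :
    zclTerm k n t = k * n - (k - 1) * (2 ^ t - 1) := by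
  have : (n : ℤ) % 2 ^ t = n := by exact_mod_cast Nat.mod_eq_of_lt hn
  rw [zclTerm, this]

theorem padicValNat_add_of_pow_succ_dvd {p a b : ℕ} [Fact p.Prime] (ha : a ≠ 0)
    (hb : p ^ (padicValNat p a + 1) ∣ b) : padicValNat p (b + a) = padicValNat p a := by
  have hba : b + a ≠ 0 := by omega
  refine le_antisymm ?_ ?_
  · by_contra! h
    have hdvd : p ^ (padicValNat p a + 1) ∣ b + a := (padicValNat_dvd_iff_le hba).mpr h
    exact pow_succ_padicValNat_not_dvd ha ((Nat.dvd_add_right hb).mp hdvd)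
  · exact (padicValNat_dvd_iff_le hba).mp <|
      dvd_add ((pow_dvd_pow p (Nat.le_succ _)).trans hb) pow_padicValNat_dvd

theorem two_pow_padicValNat_sub_one_le_zclTerm {k n e : ℕ} (hkey : (k - 1) * 2 ^ e < (n + 1) * k)
    (hn : n < 2 ^ e) : 2 ^ padicValNat 2 (n + 1) - 1 ≤ zclTerm k n e := by
  have hk : 1 ≤ k := Nat.pos_of_mul_pos_left (hkey.trans_le' (Nat.zero_le _))
  set v := padicValNat 2 (n + 1)
  have hv : 2 ^ v ∣ n + 1 := pow_padicValNat_dvd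
  have hve : v ≤ e :=
    (Nat.pow_le_pow_iff_right one_lt_two).mp ((Nat.le_of_dvd n.succ_pos hv).trans hn)
  -- `zclTerm k n e + 1 = (n + 1) k - (k - 1) 2 ^ e` is positive and divisible by `2 ^ v`
  zify [hk] at hkey
  have hdvd : (2 : ℤ) ^ v ∣ (n + 1) * k - (k - 1) * 2 ^ e :=
    dvd_sub (Dvd.dvd.mul_right (by exact_mod_cast hv) _) (Dvd.dvd.mul_left (pow_dvd_pow 2 hve) _)
  have := Int.le_of_dvd (by linarith) hdvd
  rw [zclTerm_of_lt hn]
  linarith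

theorem zclTerm_le_zclTerm {k n e : ℕ} (hkey : (k - 1) * 2 ^ e < (n + 1) * k)
    (hn : n < 2 ^ e) (t : ℕ) : zclTerm k n t ≤ zclTerm k n e := by
  have hk : 1 ≤ k := Nat.pos_of_mul_pos_left (hkey.trans_le' (Nat.zero_le _))
  rcases le_or_gt e t with hte | hte
  · rw [zclTerm_of_lt (hn.trans_le (Nat.pow_le_pow_right two_pos hte)), zclTerm_of_lt hn]
    have : (2 : ℤ) ^ e ≤ 2 ^ t := pow_le_pow_right₀ (by norm_num) hte
    have : (1 : ℤ) ≤ k := by exact_mod_cast hk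
    nlinarith
  obtain ⟨s, rfl⟩ : ∃ s, e = t + s := ⟨e - t, by omega⟩
  set A := n / 2 ^ t
  set b := n % 2 ^ t
  have hnAb : 2 ^ t * A + b = n := Nat.div_add_mod n (2 ^ t)
  have hb : b < 2 ^ t := Nat.mod_lt _ (by positivity)
  have hAs : (k - 1) * 2 ^ s < k * (A + 1) := by
    refine Nat.lt_of_mul_lt_mul_right (a := 2 ^ t) ?_
    calc (k - 1) * 2 ^ s * 2 ^ t = (k - 1) * 2 ^ (t + s) := by ring
      _ < (n + 1) * k := hkey
      _ ≤ (A + 1) * 2 ^ t * k := Nat.mul_le_mul_right k (by nlinarith)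
      _ = k * (A + 1) * 2 ^ t := by ring
  have hAs' : ((k : ℤ) - 1) * 2 ^ s ≤ k * A + (k - 1) := by
    zify [hk] at hAs
    linarith
  have hmod : (n : ℤ) % 2 ^ t = b := by exact_mod_cast (Int.natCast_mod n (2 ^ t)).symm
  have hnZ : (n : ℤ) = 2 ^ t * A + b := by exact_mod_cast hnAb.symm
  rw [zclTerm, zclTerm_of_lt hn, hmod, hnZ, pow_add]
  nlinarith [mul_le_mul_of_nonneg_left hAs' (by positivity : (0 : ℤ) ≤ 2 ^ t)]

theorem zclTerm_add_of_dvd {k d m t : ℕ} (h : 2 ^ t ∣ d) :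
    zclTerm k (d + m) t = zclTerm k m t := by
  obtain ⟨c, rfl⟩ := h
  simp only [zclTerm]
  push_cast
  rw [Int.mul_add_emod_self_left]

theorem zclSet_subset_zclSet_add {k d m i : ℕ} (hd : 2 ^ (i + 1) ∣ d) (hm : m < 2 ^ i) :
    zclSet k m ⊆ zclSet k (d + m) := by
  intro y hy
  rw [mem_zclSet] at hy ⊢
  rcases hy with rfl | ⟨t, ht, hbits, rfl⟩
  · left
    have hv : padicValNat 2 (m + 1) ≤ i := (Nat.pow_le_pow_iff_right one_lt_two).mp
      ((Nat.le_of_dvd m.succ_pos pow_padicValNat_dvd).trans hm)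
    rw [add_assoc, padicValNat_add_of_pow_succ_dvd m.succ_ne_zero
      ((pow_dvd_pow 2 (Nat.succ_le_succ hv)).trans hd)]
  · right
    have hti : t ≤ i := by
      have hm3 : 3 * 2 ^ (t - 2) ≤ m :=
        (Nat.le_div_iff_mul_le (by positivity)).mp (hbits ▸ Nat.mod_le _ 4)
      have ht1 : 2 ^ (t - 1) = 2 * 2 ^ (t - 2) := by rw [← pow_succ']; congr 1; omega
      by_contra! hit
      have := Nat.pow_le_pow_right two_pos (show i ≤ t - 1 by omega)
      omega
    obtain ⟨c, hc⟩ := (pow_dvd_pow 2 (hti.trans i.le_succ)).trans hd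
    have ht4 : 2 ^ t = 2 ^ (t - 2) * 4 := by rw [show 4 = 2 ^ 2 by rfl, ← pow_add]; congr 1; omega
    refine ⟨t, ht, ?_, zclTerm_add_of_dvd ⟨c, hc⟩⟩
    rw [hc, ht4, mul_assoc, Nat.mul_add_div (by positivity), Nat.mul_add_mod, hbits]

theorem zclTerm_mem_zclSet_of_succ_eq_two_pow {k n e : ℕ} (h : n + 1 = 2 ^ e) :
    zclTerm k n e ∈ zclSet k n := by
  have hn : (n : ℤ) = 2 ^ e - 1 := by rw [eq_sub_iff_add_eq]; exact_mod_cast h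
  rw [mem_zclSet, h, padicValNat.prime_pow, zclTerm_of_lt (by omega), hn]
  left
  ring

theorem zclTerm_mem_zclSet_of_three_mul_le {k n e : ℕ} (h : 3 * 2 ^ e ≤ n)
    (hn : n < 2 ^ (e + 2)) : zclTerm k n (e + 2) ∈ zclSet k n := by
  have hdiv : n / 2 ^ e = 3 := Nat.div_eq_of_lt_le h (by rw [pow_add] at hn; omega)
  exact mem_zclSet.mpr (Or.inr ⟨e + 2, by omega, by simp [hdiv], rfl⟩)

theorem zclTerm_three_two_pow_add {m e : ℕ} (hm : m < 2 ^ e) :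
    zclTerm 3 (2 ^ (e + 1) + m) (e + 2) = zclTerm 3 m e := by
  rw [zclTerm_of_lt hm, zclTerm_of_lt (by rw [pow_succ, pow_succ] at *; omega)]
  push_cast
  ring

theorem zclTerm_three_mem_zclSet :
    ∀ {e n : ℕ}, 2 * 2 ^ e < (n + 1) * 3 → n < 2 ^ e → zclTerm 3 n e ∈ zclSet 3 n
  | 0, _, _, hn => zclTerm_mem_zclSet_of_succ_eq_two_pow (by omega)
  | 1, _, hkey, hn => zclTerm_mem_zclSet_of_succ_eq_two_pow (by omega)
  | e + 2, n, hkey, hn => by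
    by_cases h : 3 * 2 ^ e ≤ n
    · exact zclTerm_mem_zclSet_of_three_mul_le h hn
    -- otherwise `n = 10…` in binary, and the top two bits can be stripped
    obtain ⟨m, rfl⟩ : ∃ m, n = 2 ^ (e + 1) + m := ⟨n - 2 ^ (e + 1), by rw [pow_add] at *; omega⟩
    have hm : m < 2 ^ e := by rw [pow_succ] at h; omega
    rw [zclTerm_three_two_pow_add hm]
    exact zclSet_subset_zclSet_add dvd_rfl hm
      (zclTerm_three_mem_zclSet (by rw [pow_add] at hkey; omega) hm)

theorem zclTerm_mem_zclSet {k n e : ℕ} (hk : 3 ≤ k) (hkey : (k - 1) * 2 ^ e < (n + 1) * k)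
    (hn : n < 2 ^ e) : zclTerm k n e ∈ zclSet k n := by
  obtain rfl | hk4 := hk.eq_or_lt
  · exact zclTerm_three_mem_zclSet hkey hn
  -- for `k ≥ 4` the bound `(k - 1) / k ≥ 3 / 4` forces the top two bits of `n` to be set
  have h34 : 3 * 2 ^ e < 4 * (n + 1) := by
    refine Nat.lt_of_mul_lt_mul_right (a := k) ?_
    calc 3 * 2 ^ e * k = 2 ^ e * (3 * k) := by ring
      _ ≤ 2 ^ e * (4 * (k - 1)) := Nat.mul_le_mul_left _ (by omega)
      _ = 4 * ((k - 1) * 2 ^ e) := by ring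
      _ < 4 * ((n + 1) * k) := by omega
      _ = 4 * (n + 1) * k := by ring
  rcases e with _ | _ | e
  · exact zclTerm_mem_zclSet_of_succ_eq_two_pow (by omega)
  · exact zclTerm_mem_zclSet_of_succ_eq_two_pow (by omega)
  · exact zclTerm_mem_zclSet_of_three_mul_le (by rw [pow_add] at h34; omega) hn

theorem max'_zclSet {k n e : ℕ} (hk : 3 ≤ k) (hkey : (k - 1) * 2 ^ e < (n + 1) * k)
    (hn : n < 2 ^ e) : (zclSet k n).max' (Finset.insert_nonempty _ _) = zclTerm k n e := by
  refine le_antisymm (Finset.max'_le _ _ _ fun y hy => ?_)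
    (Finset.le_max' _ _ (zclTerm_mem_zclSet hk hkey hn))
  rcases mem_zclSet.mp hy with rfl | ⟨t, -, -, rfl⟩
  · exact two_pow_padicValNat_sub_one_le_zclTerm hkey hn
  · exact zclTerm_le_zclTerm hkey hn t

theorem stmt13_general (k e n : ℕ) (hk : 3 ≤ k)
    (hn1 : (k - 1) * 2 ^ e / k ≤ n) (hn2 : n ≤ 2 ^ e - 1) :
    zclBound k n = ((k : ℤ) - 1) * (2 ^ e - 1) := by
  have hn : n < 2 ^ e := by have := Nat.one_le_two_pow (n := e); omega
  have hkey : (k - 1) * 2 ^ e < (n + 1) * k :=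
    (Nat.div_lt_iff_lt_mul (by omega)).mp (Nat.lt_succ_of_le hn1)
  rw [zclBound_eq_sub_max', max'_zclSet hk hkey hn, zclTerm_of_lt hn]
  ring

/-- Theorem 4.1: for `k ≥ 3` and `e ≥ 2`, the cohomological lower bound
`zcl_k(P^n)` equals `(k−1)(2^e−1)` for `⌊(k−1)·2^e/k⌋ ≤ n ≤ 2^e − 1`. -/
theorem stmt13 (k e n : ℕ) (hk : 3 ≤ k) (he : 2 ≤ e)
    (hn1 : (k - 1) * 2 ^ e / k ≤ n) (hn2 : n ≤ 2 ^ e - 1) :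
    zclBound k n = ((k : ℤ) - 1) * (2 ^ e - 1) :=
  stmt13_general k e n hk hn1 hn2
end

section
/- Let k ≥ 3 and e ≥ 2 be integers and let n = ⌊(k−1)·2^e/k⌋. Then k·n − 2^{ν₂(n+1)} + 1 ≥ (k−1)·(2^e − 1). -/
/-! With `m = (k-1)·2^e = k·n + r`, `0 ≤ r < k`, the power `2^ν₂(n+1)` divides `n + 1 ≤ 2^e`, hence
divides both `k(n+1)` and `m`, and so their (positive) difference `k - r`. Therefore
`k·n - 2^ν₂(n+1) + 1 ≥ k·n + r - k + 1 = (k-1)(2^e - 1)`. -/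

theorem Nat.le_sub_mod_of_dvd_div_add_one {d m k : ℕ} (hk : 0 < k) (hd : d ∣ m / k + 1)
    (hdm : d ∣ m) : d ≤ k - m % k := by
  have hr := Nat.mod_lt m hk
  have hsub : k - m % k = k * (m / k + 1) - m := by
    have := Nat.div_add_mod m k
    rw [Nat.mul_add_one]
    omega
  have hpos : 0 < k * (m / k + 1) - m := by omega
  rw [hsub]
  exact Nat.le_of_dvd hpos (Nat.dvd_sub (hd.mul_left k) hdm)

theorem pow_padicValNat_dvd_pow_of_le {p a e : ℕ} (hp : 1 < p) (ha : a ≤ p ^ e) :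
    p ^ padicValNat p a ∣ p ^ e := by
  rcases Nat.eq_zero_or_pos a with rfl | ha0
  · simp
  refine pow_dvd_pow p ((Nat.pow_le_pow_iff_right hp).mp ?_)
  exact (Nat.le_of_dvd ha0 pow_padicValNat_dvd).trans ha

theorem Nat.sub_one_mul_div_lt {k a : ℕ} (hk : 0 < k) (ha : 0 < a) :
    (k - 1) * a / k < a := by
  rw [Nat.div_lt_iff_lt_mul hk, mul_comm a]
  exact Nat.mul_lt_mul_of_pos_right (by omega) ha

theorem stmt14_general (k e : ℕ) (hk : 3 ≤ k) (n : ℕ)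
    (hn : n = (k - 1) * 2 ^ e / k) :
    ((k : ℤ) - 1) * (2 ^ e - 1) ≤ (k : ℤ) * n - 2 ^ padicValNat 2 (n + 1) + 1 := by
  have hk0 : 0 < k := by omega
  have hn_lt : n < 2 ^ e := hn ▸ Nat.sub_one_mul_div_lt hk0 (by positivity)
  have hpow : 2 ^ padicValNat 2 (n + 1) ≤ k - (k - 1) * 2 ^ e % k :=
    Nat.le_sub_mod_of_dvd_div_add_one hk0 (hn ▸ pow_padicValNat_dvd)
      ((pow_padicValNat_dvd_pow_of_le one_lt_two hn_lt).mul_left _)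
  have hdiv := Nat.div_add_mod ((k - 1) * 2 ^ e) k
  have hmod := Nat.mod_lt ((k - 1) * 2 ^ e) hk0
  rw [← hn] at hdiv
  zify [hk0, hmod.le] at hpow hdiv
  linarith

/-- Inequality (4.3) in the proof of Theorem 4.1: for `k ≥ 3`, `e ≥ 2`, and
`n = ⌊(k−1)·2^e/k⌋`, one has `k·n − 2^{ν₂(n+1)} + 1 ≥ (k−1)(2^e − 1)`. -/
theorem stmt14 (k e : ℕ) (hk : 3 ≤ k) (he : 2 ≤ e) (n : ℕ)
    (hn : n = (k - 1) * 2 ^ e / k) :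
    ((k : ℤ) - 1) * (2 ^ e - 1) ≤ (k : ℤ) * n - 2 ^ padicValNat 2 (n + 1) + 1 :=
  stmt14_general k e hk n hn
end

section
/- Let k ≥ 3 be odd, let β be the multiplicative order of 2 modulo k (the smallest positive integer with k dividing 2^β − 1), and set m = (k−1)·(2^β − 1)/k. Then for every integer t with 1 ≤ t ≤ β, (2^β − 1)·(m mod 2^t) ≤ (2^t − 1)·m. -/
/-- Inequality (4.5) in the proof of Theorem 4.1: for odd `k ≥ 3` with `β` the
multiplicative order of 2 mod `k` and `m = (k−1)(2^β−1)/k`, for `1 ≤ t ≤ β` one has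
`(2^β − 1)·(m mod 2^t) ≤ (2^t − 1)·m`. -/
theorem stmt16 (k : ℕ) (hk : 3 ≤ k) (hodd : Odd k) (β : ℕ) (hβpos : 0 < β)
    (hβdvd : k ∣ 2 ^ β - 1)
    (hβmin : ∀ β', 0 < β' → k ∣ 2 ^ β' - 1 → β ≤ β')
    (m : ℕ) (hm : k * m = (k - 1) * (2 ^ β - 1)) :
    ∀ t : ℕ, 1 ≤ t → t ≤ β → (2 ^ β - 1) * (m % 2 ^ t) ≤ (2 ^ t - 1) * m := by
  intro t ht htβ
  have hk0 : 0 < k := by omega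
  obtain ⟨M, hN1⟩ := hβdvd
  have h2β : 2 ≤ 2 ^ β := by
    calc (2:ℕ) = 2 ^ 1 := rfl
    _ ≤ 2 ^ β := Nat.pow_le_pow_right (by norm_num) hβpos
  have hNpos : 0 < 2 ^ β - 1 := by omega
  have hM1 : 1 ≤ M := by
    rcases Nat.eq_zero_or_pos M with h | h
    · rw [h, Nat.mul_zero] at hN1; omega
    · exact h
  have hmM : m = (k - 1) * M := by
    have h : k * m = k * ((k - 1) * M) := by rw [hm, hN1]; ring
    exact Nat.eq_of_mul_eq_mul_left hk0 h
  have hmMN : m + M = k * M := by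
    rw [hmM]
    have h : (k - 1) * M + M = (k - 1 + 1) * M := by ring
    rw [h, Nat.sub_add_cancel (by omega)]
  set T := 2 ^ t with hT
  have hTpos : 2 ≤ T := by
    calc (2:ℕ) = 2 ^ 1 := rfl
    _ ≤ 2 ^ t := Nat.pow_le_pow_right (by norm_num) ht
  have hTdvd : T ∣ 2 ^ β := pow_dvd_pow 2 htβ
  obtain ⟨c, hc⟩ := hTdvd
  have hc1 : 1 ≤ c := by
    rcases Nat.eq_zero_or_pos c with h | h
    · rw [h, Nat.mul_zero] at hc; omega
    · exact h
  obtain ⟨d, rfl⟩ : ∃ d, c = d + 1 := ⟨c - 1, by omega⟩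
  have hNmod : (2 ^ β - 1) % T = T - 1 := by
    have h : 2 ^ β - 1 = T * d + (T - 1) := by
      have h2 : T * (d + 1) = T * d + T := by ring
      omega
    rw [h, Nat.mul_add_mod, Nat.mod_eq_of_lt (by omega)]
  set R := M % T with hR
  set r := m % T with hr
  have hRlt : R < T := Nat.mod_lt _ (by omega)
  have hrlt : r < T := Nat.mod_lt _ (by omega)
  -- k * R ≥ T - 1
  have hkRmod : (k * R) % T = T - 1 := by
    have h1 : (k * R) % T = (k * M) % T := by
      conv_rhs => rw [Nat.mul_mod]
      rw [Nat.mul_mod, Nat.mod_eq_of_lt hRlt]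
    rw [h1, ← hN1, hNmod]
  have hkRge : T - 1 ≤ k * R := hkRmod ▸ Nat.mod_le (k * R) T
  -- r + R = T - 1
  have h1 : (r + R) % T = T - 1 := by
    rw [hr, hR, ← Nat.add_mod, hmMN, ← hN1, hNmod]
  have hrR : r + R + 1 = T := by
    rcases lt_or_ge (r + R) T with h | h
    · rw [Nat.mod_eq_of_lt h] at h1; omega
    · have h2 : r + R - T < T := by omega
      rw [Nat.mod_eq_sub_mod h, Nat.mod_eq_of_lt h2] at h1
      omega
  -- final computation
  rw [hN1]
  have hT1 : T - 1 = r + R := by omega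
  rw [hT1]
  have key : (r + R) * M ≤ k * R * M := Nat.mul_le_mul_right M (by omega)
  nlinarith [hmMN, key, hM1]
end
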